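/- arXiv:math/0606523 — 7 statements merged into one kernel-verified Lean document; each statement's English description precedes it below -/
import Mathlib

section
/- Let q, u ∈ ℂ be nonzero, with the multiplicative order of q at least 2n-1 (or infinite). If two partitions λ and μ of n have the same multiset of residues {u·q^(j-i) : (i,j) a node}, then λ = μ. -/
/-- A partition function: weakly decreasing row lengths. -/
def IsPartitionFun (lam : ℕ → ℕ) : Prop := ∀ i, lam (i + 1) ≤ lam i

/-- `lam` is a partition of `n`. -/
def IsPartitionOf (lam : ℕ → ℕ) (n : ℕ) : Prop :=
  IsPartitionFun lam ∧ (Function.support lam).Finite ∧ ∑ᶠ i, lam i = n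

/-- Residue of the node in (0-based) row `i`, column `j`: `u * q ^ (j - i)`. -/
noncomputable def resid (u q : ℂ) (i j : ℕ) : ℂ := u * q ^ ((j : ℤ) - (i : ℤ))

/-- Multiplicity of `z` in the multiset of residues (the content) of `lam`. -/
noncomputable def contCount (lam : ℕ → ℕ) (u q z : ℂ) : ℕ :=
  Set.ncard {p : ℕ × ℕ | p.2 < lam p.1 ∧ resid u q p.1 p.2 = z}

/-- The multiplicative order of `q` is at least `N` (or infinite). -/
def OrderAtLeast (q : ℂ) (N : ℕ) : Prop := ∀ k : ℕ, 0 < k → k < N → q ^ k ≠ 1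

/-- A finite lower subset of ℕ is an initial segment. -/
lemma lower_finite_mem_iff {T : Set ℕ} (hfin : T.Finite)
    (hlow : ∀ k, k + 1 ∈ T → k ∈ T) (k : ℕ) : k ∈ T ↔ k < T.ncard := by
  have hmem : ∀ m, m ∈ T → ∀ j, j ≤ m → j ∈ T := by
    intro m
    induction m with
    | zero => intro hm j hj; obtain rfl : j = 0 := Nat.le_zero.mp hj; exact hm
    | succ m ih =>
      intro hm j hj
      rcases Nat.eq_or_lt_of_le hj with rfl | h
      · exact hm
      · exact ih (hlow m hm) j (Nat.lt_succ_iff.mp h)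
  have hIio : ∀ m : ℕ, (Set.Iio m : Set ℕ).ncard = m := by
    intro m
    rw [show (Set.Iio m : Set ℕ) = ↑(Finset.range m) by ext; simp,
      Set.ncard_coe_finset, Finset.card_range]
  constructor
  · intro hk
    have hsub : Set.Iio (k + 1) ⊆ T := fun j hj => hmem k hk j (Nat.lt_succ_iff.mp hj)
    have h1 : (Set.Iio (k + 1)).ncard ≤ T.ncard := Set.ncard_le_ncard hsub hfin
    rw [hIio] at h1; omega
  · intro hk
    by_contra hkT
    have hsub : T ⊆ Set.Iio k := by
      intro m hm
      by_contra hmk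
      exact hkT (hmem m hm k (not_lt.mp hmk))
    have h1 : T.ncard ≤ (Set.Iio k).ncard := Set.ncard_le_ncard hsub (Set.finite_Iio k)
    rw [hIio] at h1; omega

lemma cells_finite {lam : ℕ → ℕ} (hfin : (Function.support lam).Finite) :
    {p : ℕ × ℕ | p.2 < lam p.1}.Finite := by
  have h : {p : ℕ × ℕ | p.2 < lam p.1} =
      ⋃ i ∈ Function.support lam, {i} ×ˢ Set.Iio (lam i) := by
    ext ⟨a, b⟩
    simp only [Set.mem_setOf_eq, Set.mem_iUnion, Set.mem_prod, Set.mem_singleton_iff,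
      Set.mem_Iio, Function.mem_support]
    constructor
    · intro hb; exact ⟨a, by omega, rfl, hb⟩
    · rintro ⟨i, _, rfl, hb⟩; exact hb
  rw [h]
  exact hfin.biUnion fun i _ => (Set.finite_singleton i).prod (Set.finite_Iio _)

/-- The key structural lemma: membership of a node is equivalent to
`min i j` being less than the length of its diagonal. -/
lemma crit {lam : ℕ → ℕ} (hp : IsPartitionFun lam)
    (hfin : (Function.support lam).Finite) (i j : ℕ) :
    j < lam i ↔
      min i j < Set.ncard {p : ℕ × ℕ | p.2 < lam p.1 ∧ (p.2 : ℤ) - p.1 = (j : ℤ) - i} := by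
  rcases le_or_gt i j with hij | hij
  · -- d = j - i ≥ 0
    set c : ℕ := j - i with hc
    have hjc : j = i + c := by omega
    set T : Set ℕ := {k | k + c < lam k} with hT
    have hTfin : T.Finite := hfin.subset (by intro k hk; simp only [hT, Set.mem_setOf_eq] at hk
                                             simp only [Function.mem_support]; omega)
    have hTlow : ∀ k, k + 1 ∈ T → k ∈ T := by
      intro k hk
      simp only [hT, Set.mem_setOf_eq] at *
      have := hp k
      omega
    have himg : {p : ℕ × ℕ | p.2 < lam p.1 ∧ (p.2 : ℤ) - p.1 = (j : ℤ) - i} =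
        (fun k => (k, k + c)) '' T := by
      ext ⟨a, b⟩
      simp only [Set.mem_setOf_eq, Set.mem_image, hT, Prod.mk.injEq]
      constructor
      · rintro ⟨h1, h2⟩
        refine ⟨a, ?_, rfl, ?_⟩ <;> omega
      · rintro ⟨k, hk, rfl, rfl⟩
        constructor
        · omega
        · push_cast; omega
    rw [himg, Set.ncard_image_of_injective _ (fun a b h => by simpa using (Prod.mk.injEq _ _ _ _ ▸ h).1)]
    rw [min_eq_left hij]
    rw [← lower_finite_mem_iff hTfin hTlow i]
    simp only [hT, Set.mem_setOf_eq]
    omega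
  · -- d < 0
    set c : ℕ := i - j with hc
    have hic : i = j + c := by omega
    set T : Set ℕ := {k | k < lam (k + c)} with hT
    have hTfin : T.Finite := by
      have : T ⊆ (· + c) ⁻¹' (Function.support lam) := by
        intro k hk; simp only [hT, Set.mem_setOf_eq] at hk
        simp only [Set.mem_preimage, Function.mem_support]; omega
      exact (hfin.preimage (Set.injOn_of_injective (add_left_injective c))).subset this
    have hTlow : ∀ k, k + 1 ∈ T → k ∈ T := by
      intro k hk
      simp only [hT, Set.mem_setOf_eq] at *
      rw [show k + 1 + c = k + c + 1 from by omega] at hk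
      have := hp (k + c)
      omega
    have himg : {p : ℕ × ℕ | p.2 < lam p.1 ∧ (p.2 : ℤ) - p.1 = (j : ℤ) - i} =
        (fun k => (k + c, k)) '' T := by
      ext ⟨a, b⟩
      simp only [Set.mem_setOf_eq, Set.mem_image, hT, Prod.mk.injEq]
      constructor
      · rintro ⟨h1, h2⟩
        obtain rfl : a = b + c := by omega
        exact ⟨b, h1, rfl, rfl⟩
      · rintro ⟨k, hk, rfl, rfl⟩
        constructor
        · omega
        · push_cast; omega
    rw [himg, Set.ncard_image_of_injective _ (fun a b h => by simpa using (Prod.mk.injEq _ _ _ _ ▸ h).2)]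
    rw [min_eq_right (le_of_lt hij)]
    rw [← lower_finite_mem_iff hTfin hTlow j]
    simp only [hT, Set.mem_setOf_eq]
    have hli : lam i = lam (j + c) := congrArg lam hic
    omega

lemma anti_of_fun {lam : ℕ → ℕ} (hp : IsPartitionFun lam) :
    ∀ a b : ℕ, a ≤ b → lam b ≤ lam a := by
  intro a b hab
  induction b with
  | zero => obtain rfl : a = 0 := Nat.le_zero.mp hab; exact le_rfl
  | succ b ih =>
    rcases Nat.eq_or_lt_of_le hab with rfl | h
    · exact le_rfl
    · exact le_trans (hp b) (ih (Nat.lt_succ_iff.mp h))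

lemma cell_bound {lam : ℕ → ℕ} {n : ℕ} (h : IsPartitionOf lam n) :
    ∀ i j, j < lam i → i < n ∧ j < n := by
  obtain ⟨hmono, hfin, hsum⟩ := h
  intro i j hij
  have hle : ∀ k, lam k ≤ n := by
    intro k
    by_cases hk : lam k = 0
    · omega
    have hk' : k ∈ hfin.toFinset := by simp [Function.mem_support, hk]
    calc lam k ≤ ∑ m ∈ hfin.toFinset, lam m :=
          Finset.single_le_sum (fun m _ => Nat.zero_le _) hk'
      _ = n := by rw [← finsum_eq_sum lam hfin, hsum]
  have hin : i < n := by
    have hsub : Finset.range (i + 1) ⊆ hfin.toFinset := by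
      intro k hk
      simp only [Finset.mem_range] at hk
      have := anti_of_fun hmono k i (by omega)
      simp only [Set.Finite.mem_toFinset, Function.mem_support]
      omega
    have h1 : ∑ k ∈ Finset.range (i + 1), lam k ≤ ∑ m ∈ hfin.toFinset, lam m :=
      Finset.sum_le_sum_of_subset hsub
    have h2 : i + 1 ≤ ∑ k ∈ Finset.range (i + 1), lam k := by
      calc i + 1 = ∑ _k ∈ Finset.range (i + 1), 1 := by simp
        _ ≤ ∑ k ∈ Finset.range (i + 1), lam k := by
            refine Finset.sum_le_sum fun k hk => ?_
            simp only [Finset.mem_range] at hk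
            have := anti_of_fun hmono k i (by omega)
            omega
    have h3 : ∑ m ∈ hfin.toFinset, lam m = n := by rw [← finsum_eq_sum lam hfin, hsum]
    omega
  exact ⟨hin, lt_of_lt_of_le hij (hle i)⟩

lemma pow_injective_small {n : ℕ} {q : ℂ} (hq : q ≠ 0)
    (hord : OrderAtLeast q (2 * n - 1)) {d e : ℤ}
    (hd : d.natAbs < n) (he : e.natAbs < n) (h : q ^ d = q ^ e) : d = e := by
  by_contra hne
  have hz : q ^ (d - e) = 1 := by
    rw [zpow_sub₀ hq, h, div_self (zpow_ne_zero _ hq)]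
  set m := d - e with hm
  have hm0 : m ≠ 0 := by omega
  have hpow : q ^ m.natAbs = 1 := by
    rcases Int.natAbs_eq m with h' | h'
    · rw [← zpow_natCast, ← h', hz]
    · have h'' : (m.natAbs : ℤ) = -m := by omega
      rw [← zpow_natCast, h'', zpow_neg, hz, inv_one]
  exact hord m.natAbs (by omega) (by omega) hpow

lemma cont_eq_diag {n : ℕ} {q u : ℂ} (hq : q ≠ 0) (hu : u ≠ 0)
    (hord : OrderAtLeast q (2 * n - 1)) {lam : ℕ → ℕ}
    (hcell : ∀ i j, j < lam i → i < n ∧ j < n) (d : ℤ) (hd : d.natAbs < n) :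
    contCount lam u q (u * q ^ d) =
      Set.ncard {p : ℕ × ℕ | p.2 < lam p.1 ∧ (p.2 : ℤ) - p.1 = d} := by
  unfold contCount
  congr 1
  ext ⟨a, b⟩
  simp only [Set.mem_setOf_eq, resid]
  constructor
  · rintro ⟨h1, h2⟩
    refine ⟨h1, ?_⟩
    have hb := hcell a b h1
    have heq : q ^ ((b : ℤ) - a) = q ^ d := mul_left_cancel₀ hu h2
    exact pow_injective_small hq hord (by omega) hd heq
  · rintro ⟨h1, h2⟩
    exact ⟨h1, by rw [h2]⟩

/-- Two partitions of `n` with the same content are equal, provided the order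
of `q` is at least `2n - 1`. -/
theorem stmt1 (n : ℕ) (q u : ℂ) (hq : q ≠ 0) (hu : u ≠ 0)
    (hord : OrderAtLeast q (2 * n - 1))
    (lam mu : ℕ → ℕ) (hlam : IsPartitionOf lam n) (hmu : IsPartitionOf mu n)
    (hcont : ∀ z : ℂ, contCount lam u q z = contCount mu u q z) :
    lam = mu := by
  have hcl := cell_bound hlam
  have hcm := cell_bound hmu
  obtain ⟨hpl, hfl, -⟩ := hlam
  obtain ⟨hpm, hfm, -⟩ := hmu
  have hD : ∀ d : ℤ,
      Set.ncard {p : ℕ × ℕ | p.2 < lam p.1 ∧ (p.2 : ℤ) - p.1 = d} =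
      Set.ncard {p : ℕ × ℕ | p.2 < mu p.1 ∧ (p.2 : ℤ) - p.1 = d} := by
    intro d
    by_cases hd : d.natAbs < n
    · rw [← cont_eq_diag hq hu hord hcl d hd, ← cont_eq_diag hq hu hord hcm d hd]
      exact hcont _
    · have e1 : {p : ℕ × ℕ | p.2 < lam p.1 ∧ (p.2 : ℤ) - p.1 = d} = ∅ := by
        ext ⟨a, b⟩
        simp only [Set.mem_setOf_eq, Set.mem_empty_iff_false, iff_false, not_and]
        intro h1
        have := hcl a b h1
        omega
      have e2 : {p : ℕ × ℕ | p.2 < mu p.1 ∧ (p.2 : ℤ) - p.1 = d} = ∅ := by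
        ext ⟨a, b⟩
        simp only [Set.mem_setOf_eq, Set.mem_empty_iff_false, iff_false, not_and]
        intro h1
        have := hcm a b h1
        omega
      rw [e1, e2]
  funext i
  have key : ∀ j, j < lam i ↔ j < mu i := by
    intro j
    rw [crit hpl hfl i j, crit hpm hfm i j, hD]
  rcases lt_trichotomy (lam i) (mu i) with h | h | h
  · exact absurd ((key (lam i)).mpr h) (lt_irrefl _)
  · exact h
  · exact absurd ((key (mu i)).mp h) (lt_irrefl _)
end

section
/- Let q, u_1, …, u_m ∈ ℂ be nonzero with q^(n-1)·u_i = u_j for some fixed i ≠ j, and suppose for all pairs (k,ℓ) with {k,ℓ} ≠ {i,j} (k ≠ ℓ), u_k/u_ℓ ≠ q^c for all -n < c < n; suppose also the multiplicative order of q is at least 2n-1 (or infinite). For 0 ≤ a ≤ n, let λ_a be the multipartition of n with a row of a boxes in position i, a column of n-a boxes in position j, and empty elsewhere. Then the content of λ_a equals the multiset {u_i·q^x : 0 ≤ x ≤ n-1}, each with multiplicity one; in particular all λ_a, 0 ≤ a ≤ n, have the same content. -/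
/-- An `m`-multipartition of `n`. -/
def IsMultipartitionOf {m : ℕ} (lam : Fin m → ℕ → ℕ) (n : ℕ) : Prop :=
  (∀ k, IsPartitionFun (lam k) ∧ (Function.support (lam k)).Finite) ∧
    ∑ k, ∑ᶠ i, lam k i = n

/-- Multiplicity of `z` in the content of the multipartition `lam`. -/
noncomputable def mcontCount {m : ℕ} (lam : Fin m → ℕ → ℕ) (u : Fin m → ℂ) (q z : ℂ) : ℕ :=
  ∑ k, contCount (lam k) (u k) q z

/-- The multipartition `λ_a`: a row of `a` boxes in component `i`, a column of
`n - a` boxes in component `j`, empty elsewhere. -/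
def lamA {m : ℕ} (i j : Fin m) (n a : ℕ) : Fin m → ℕ → ℕ := fun k r =>
  if k = i then (if r = 0 then a else 0)
  else if k = j then (if r < n - a then 1 else 0) else 0

lemma qpow_inj {q : ℂ} (hq : q ≠ 0) {n : ℕ} (hord : OrderAtLeast q (2 * n - 1))
    {s t : ℕ} (hs : s < n) (ht : t < n) (h : q ^ s = q ^ t) : s = t := by
  by_contra hne
  wlog hlt : t < s generalizing s t
  · exact this ht hs h.symm (Ne.symm hne) (by omega)
  have h1 : q ^ (s - t) = 1 := by
    rw [pow_sub₀ q hq hlt.le, h, mul_inv_cancel₀ (pow_ne_zero _ hq)]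
  exact hord (s - t) (by omega) (by omega) h1

lemma col_resid {q : ℂ} (hq : q ≠ 0) {n a r : ℕ} (hr : r < n - a) (ui : ℂ) :
    (q ^ (n - 1) * ui) * q ^ ((0:ℤ) - (r:ℤ)) = ui * q ^ (n - 1 - r) := by
  rw [mul_comm (q ^ (n-1)) ui, mul_assoc]
  congr 1
  rw [← zpow_natCast q (n-1), ← zpow_add₀ hq, ← zpow_natCast q (n-1-r)]
  congr 1
  omega

/-- Under the parameter hypotheses, the content of each `λ_a` (`0 ≤ a ≤ n`) is
the multiset `{u i * q ^ x : 0 ≤ x ≤ n - 1}`, each residue with multiplicity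
one; in particular all `λ_a` have the same content. -/
theorem stmt3 (n m : ℕ) (q : ℂ) (u : Fin m → ℂ) (hq : q ≠ 0) (hu : ∀ k, u k ≠ 0)
    (i j : Fin m) (hij : i ≠ j)
    (hrel : q ^ (n - 1) * u i = u j)
    (hother : ∀ k l : Fin m, k ≠ l → ({k, l} : Set (Fin m)) ≠ {i, j} →
      ∀ c : ℤ, -(n : ℤ) < c → c < (n : ℤ) → u k / u l ≠ q ^ c)
    (hord : OrderAtLeast q (2 * n - 1))
    (a : ℕ) (ha : a ≤ n) :
    (∀ x : ℕ, x < n → mcontCount (lamA i j n a) u q (u i * q ^ x) = 1) ∧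
    (∀ z : ℂ, (∀ x : ℕ, x < n → z ≠ u i * q ^ x) →
      mcontCount (lamA i j n a) u q z = 0) := by
  have hji : j ≠ i := hij.symm
  have hlami : (lamA i j n a i) = fun r => if r = 0 then a else 0 := by
    funext r; simp [lamA]
  have hlamj : (lamA i j n a j) = fun r => if r < n - a then 1 else 0 := by
    funext r; simp [lamA, hji]
  -- reduce the sum to the two interesting components
  have hsum : ∀ z, mcontCount (lamA i j n a) u q z =
      contCount (fun r => if r = 0 then a else 0) (u i) q z +
        contCount (fun r => if r < n - a then 1 else 0) (u j) q z := by
    intro z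
    unfold mcontCount
    rw [← Finset.sum_subset (Finset.subset_univ ({i, j} : Finset (Fin m))),
      Finset.sum_pair hij, hlami, hlamj]
    intro k _ hk
    simp only [Finset.mem_insert, Finset.mem_singleton, not_or] at hk
    unfold contCount
    convert Set.ncard_empty (ℕ × ℕ)
    ext p
    simp [lamA, hk.1, hk.2]
  -- row component counts
  have hrow1 : ∀ x : ℕ, x < n →
      contCount (fun r => if r = 0 then a else 0) (u i) q (u i * q ^ x) =
        if x < a then 1 else 0 := by
    intro x hx
    unfold contCount
    by_cases hxa : x < a
    · rw [if_pos hxa]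
      convert Set.ncard_singleton ((0 : ℕ), x)
      ext ⟨r, c⟩
      simp only [Set.mem_setOf_eq, resid, Set.mem_singleton_iff, Prod.mk.injEq]
      constructor
      · rintro ⟨hc, hres⟩
        have hr0 : r = 0 := by by_contra h; rw [if_neg h] at hc; omega
        subst hr0
        rw [if_pos rfl] at hc
        rw [Nat.cast_zero, sub_zero, zpow_natCast] at hres
        exact ⟨rfl, qpow_inj hq hord (lt_of_lt_of_le hc ha) hx (mul_left_cancel₀ (hu i) hres)⟩
      · rintro ⟨hr, hc⟩
        subst hr; subst hc
        refine ⟨by rw [if_pos rfl]; exact hxa, ?_⟩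
        rw [Nat.cast_zero, sub_zero, zpow_natCast]
    · rw [if_neg hxa]
      convert Set.ncard_empty (ℕ × ℕ)
      ext ⟨r, c⟩
      simp only [Set.mem_setOf_eq, resid, Set.mem_empty_iff_false, iff_false, not_and]
      intro hc hres
      have hr0 : r = 0 := by by_contra h; rw [if_neg h] at hc; omega
      subst hr0
      rw [if_pos rfl] at hc
      rw [Nat.cast_zero, sub_zero, zpow_natCast] at hres
      have := qpow_inj hq hord (lt_of_lt_of_le hc ha) hx (mul_left_cancel₀ (hu i) hres)
      omega
  -- column component counts
  have hcol1 : ∀ x : ℕ, x < n →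
      contCount (fun r => if r < n - a then 1 else 0) (u j) q (u i * q ^ x) =
        if a ≤ x then 1 else 0 := by
    intro x hx
    unfold contCount
    by_cases hxa : a ≤ x
    · rw [if_pos hxa]
      convert Set.ncard_singleton ((n - 1 - x : ℕ), (0 : ℕ))
      ext ⟨r, c⟩
      simp only [Set.mem_setOf_eq, resid, Set.mem_singleton_iff, Prod.mk.injEq]
      constructor
      · rintro ⟨hc, hres⟩
        have hr : r < n - a := by by_contra h; rw [if_neg h] at hc; omega
        rw [if_pos hr] at hc
        have hc0 : c = 0 := by omega
        subst hc0
        rw [Nat.cast_zero, ← hrel, col_resid hq hr (u i)] at hres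
        have := qpow_inj hq hord (show n - 1 - r < n by omega) hx (mul_left_cancel₀ (hu i) hres)
        exact ⟨by omega, rfl⟩
      · rintro ⟨hr, hc⟩
        subst hr; subst hc
        have hrlt : n - 1 - x < n - a := by omega
        refine ⟨by rw [if_pos hrlt]; norm_num, ?_⟩
        rw [Nat.cast_zero, ← hrel, col_resid hq hrlt (u i)]
        congr 2
        omega
    · rw [if_neg hxa]
      convert Set.ncard_empty (ℕ × ℕ)
      ext ⟨r, c⟩
      simp only [Set.mem_setOf_eq, resid, Set.mem_empty_iff_false, iff_false, not_and]
      intro hc hres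
      have hr : r < n - a := by by_contra h; rw [if_neg h] at hc; omega
      rw [if_pos hr] at hc
      have hc0 : c = 0 := by omega
      subst hc0
      rw [Nat.cast_zero, ← hrel, col_resid hq hr (u i)] at hres
      have := qpow_inj hq hord (show n - 1 - r < n by omega) hx (mul_left_cancel₀ (hu i) hres)
      omega
  constructor
  · intro x hx
    rw [hsum, hrow1 x hx, hcol1 x hx]
    by_cases hxa : x < a
    · rw [if_pos hxa, if_neg (by omega)]
    · rw [if_neg hxa, if_pos (by omega)]
  · intro z hz
    rw [hsum]
    have hrow0 : contCount (fun r => if r = 0 then a else 0) (u i) q z = 0 := by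
      unfold contCount
      convert Set.ncard_empty (ℕ × ℕ)
      ext ⟨r, c⟩
      simp only [Set.mem_setOf_eq, resid, Set.mem_empty_iff_false, iff_false, not_and]
      intro hc hres
      have hr0 : r = 0 := by by_contra h; rw [if_neg h] at hc; omega
      subst hr0
      rw [if_pos rfl] at hc
      rw [Nat.cast_zero, sub_zero, zpow_natCast] at hres
      exact hz c (lt_of_lt_of_le hc ha) hres.symm
    have hcol0 : contCount (fun r => if r < n - a then 1 else 0) (u j) q z = 0 := by
      unfold contCount
      convert Set.ncard_empty (ℕ × ℕ)
      ext ⟨r, c⟩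
      simp only [Set.mem_setOf_eq, resid, Set.mem_empty_iff_false, iff_false, not_and]
      intro hc hres
      have hr : r < n - a := by by_contra h; rw [if_neg h] at hc; omega
      rw [if_pos hr] at hc
      have hc0 : c = 0 := by omega
      subst hc0
      rw [Nat.cast_zero, ← hrel, col_resid hq hr (u i)] at hres
      exact hz (n - 1 - r) (by omega) hres.symm
    rw [hrow0, hcol0]
end

section
/- Let q, u_1, …, u_m ∈ ℂ be nonzero with q^(n-1)·u_i = u_j for fixed i ≠ j, u_k/u_ℓ ≠ q^c for all -n < c < n whenever k ≠ ℓ and {k,ℓ} ≠ {i,j}, and multiplicative order of q at least 2n-1 (or infinite). If α and β are multipartitions of n with equal contents, then for every k ∉ {i,j}, α^(k) = β^(k). -/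
namespace Stmt4Aux


/-- Cells on diagonal `c`, parametrized by `t = min row col`. -/
def Dset (lam : ℕ → ℕ) (c : ℤ) : Set ℕ :=
  {t | t + c.toNat < lam (t + (-c).toNat)}

noncomputable def D (lam : ℕ → ℕ) (c : ℤ) : ℕ := (Dset lam c).ncard

lemma anti (h : IsPartitionFun lam) : Antitone lam :=
  antitone_nat_of_succ_le h

lemma col_lt {lam : ℕ → ℕ} (hfin : (Function.support lam).Finite) {r j : ℕ}
    (h : j < lam r) : j < ∑ᶠ i, lam i :=
  lt_of_lt_of_le h (single_le_finsum r hfin fun _ => Nat.zero_le _)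

lemma row_lt {lam : ℕ → ℕ} (hl : IsPartitionFun lam)
    (hfin : (Function.support lam).Finite) {r : ℕ}
    (h : 0 < lam r) : r < ∑ᶠ i, lam i := by
  have key : ∀ i ∈ Finset.range (r + 1), 1 ≤ lam i := by
    intro i hi
    have := anti hl (Nat.lt_succ_iff.mp (Finset.mem_range.mp hi))
    omega
  have h1 : r + 1 ≤ ∑ i ∈ Finset.range (r + 1), lam i := by
    calc r + 1 = ∑ _i ∈ Finset.range (r + 1), 1 := by simp
    _ ≤ _ := Finset.sum_le_sum key
  have hsub : Finset.range (r + 1) ⊆ hfin.toFinset := by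
    intro i hi
    simp only [Set.Finite.mem_toFinset, Function.mem_support]
    have := key i hi; omega
  have h2 : ∑ i ∈ Finset.range (r + 1), lam i ≤ ∑ i ∈ hfin.toFinset, lam i :=
    Finset.sum_le_sum_of_subset hsub
  rw [finsum_eq_sum lam hfin]
  omega

lemma Dset_finite {lam : ℕ → ℕ} (hfin : (Function.support lam).Finite) (c : ℤ) :
    (Dset lam c).Finite := by
  apply (Set.finite_Iio (∑ᶠ i, lam i)).subset
  intro t ht
  have := col_lt hfin ht
  simp only [Set.mem_Iio]; omega

lemma ncard_Iio (n : ℕ) : (Set.Iio n).ncard = n := by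
  rw [← Finset.coe_range, Set.ncard_coe_finset, Finset.card_range]

lemma downset_iff {S : Set ℕ} (hfin : S.Finite) (hstep : ∀ t, t + 1 ∈ S → t ∈ S) :
    ∀ t, t ∈ S ↔ t < S.ncard := by
  have hdown' : ∀ d a : ℕ, a + d ∈ S → a ∈ S := by
    intro d
    induction d with
    | zero => exact fun a h => h
    | succ d ih => exact fun a h => ih a (hstep (a + d) h)
  have hdown : ∀ a b : ℕ, a ≤ b → b ∈ S → a ∈ S := by
    intro a b hab hb
    obtain ⟨d, rfl⟩ := Nat.exists_eq_add_of_le hab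
    exact hdown' d a hb
  intro t
  constructor
  · intro ht
    have hsub : Set.Iio (t + 1) ⊆ S := fun a ha => hdown a t (Nat.lt_succ_iff.mp ha) ht
    have := Set.ncard_le_ncard hsub hfin
    rw [ncard_Iio] at this; omega
  · intro ht
    by_contra hns
    have hsub : S ⊆ Set.Iio t := by
      intro s hs
      by_contra h
      exact hns (hdown t s (not_lt.mp h) hs)
    have := Set.ncard_le_ncard hsub (Set.finite_Iio t)
    rw [ncard_Iio] at this; omega

lemma cell_iff {lam : ℕ → ℕ} (hl : IsPartitionFun lam)
    (hfin : (Function.support lam).Finite) (r j : ℕ) :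
    j < lam r ↔ min r j < D lam ((j : ℤ) - r) := by
  have hstep : ∀ t, t + 1 ∈ Dset lam ((j : ℤ) - r) → t ∈ Dset lam ((j : ℤ) - r) := by
    intro t ht
    have h2 := anti hl (show t + (-((j:ℤ) - r)).toNat ≤ t + 1 + (-((j:ℤ) - r)).toNat by omega)
    simp only [Dset, Set.mem_setOf_eq] at ht ⊢
    omega
  have h1 := downset_iff (Dset_finite hfin _) hstep (min r j)
  have hmem : min r j ∈ Dset lam ((j : ℤ) - r) ↔ j < lam r := by
    simp only [Dset, Set.mem_setOf_eq]
    have e1 : min r j + ((j : ℤ) - r).toNat = j := by omega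
    have e2 : min r j + (-((j : ℤ) - r)).toNat = r := by omega
    rw [e1, e2]
  rw [← hmem, h1]
  rfl

lemma qpow_ne_one {q : ℂ} {n : ℕ} (hord : OrderAtLeast q (2 * n - 1)) {e : ℤ}
    (he : e ≠ 0) (hlt : e.natAbs < 2 * n - 1) : q ^ e ≠ 1 := by
  intro hone
  have h1 : q ^ (e.natAbs : ℤ) = 1 := by
    rcases lt_or_gt_of_ne he with h | h
    · rw [show (e.natAbs : ℤ) = -e by omega, zpow_neg, hone, inv_one]
    · rw [show (e.natAbs : ℤ) = e by omega]; exact hone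
  rw [zpow_natCast] at h1
  exact hord e.natAbs (by omega) hlt h1

lemma contCount_eq {q u : ℂ} {n : ℕ} (hq : q ≠ 0) (hu : u ≠ 0)
    (hord : OrderAtLeast q (2 * n - 1)) {lam : ℕ → ℕ} (hl : IsPartitionFun lam)
    (hfin : (Function.support lam).Finite) (hs : ∑ᶠ i, lam i ≤ n)
    (c : ℤ) (hc : c.natAbs < n) :
    contCount lam u q (u * q ^ c) = D lam c := by
  have hset : {p : ℕ × ℕ | p.2 < lam p.1 ∧ resid u q p.1 p.2 = u * q ^ c}
      = (fun t => (t + (-c).toNat, t + c.toNat)) '' Dset lam c := by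
    ext ⟨r, j⟩
    simp only [Set.mem_setOf_eq, Set.mem_image]
    constructor
    · rintro ⟨hcell, hres⟩
      have hj := col_lt hfin hcell
      have hr := row_lt hl hfin (lt_of_le_of_lt (Nat.zero_le j) hcell)
      have hδ : (j : ℤ) - r = c := by
        by_contra hne
        have h2 : q ^ ((j : ℤ) - r) = q ^ c := mul_left_cancel₀ hu hres
        have h3 : q ^ ((j : ℤ) - r - c) = 1 := by
          rw [zpow_sub₀ hq, h2, div_self (zpow_ne_zero _ hq)]
        exact qpow_ne_one hord (by omega) (by omega) h3
      refine ⟨min r j, ?_, ?_⟩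
      · show min r j + c.toNat < lam (min r j + (-c).toNat)
        have e1 : min r j + c.toNat = j := by omega
        have e2 : min r j + (-c).toNat = r := by omega
        rw [e1, e2]; exact hcell
      · have e1 : min r j + c.toNat = j := by omega
        have e2 : min r j + (-c).toNat = r := by omega
        simp [e1, e2]
    · rintro ⟨t, ht, heq⟩
      rw [Prod.ext_iff] at heq
      obtain ⟨h1, h2⟩ := heq
      subst h1; subst h2
      refine ⟨ht, ?_⟩
      unfold resid
      congr 1
      congr 1
      push_cast
      omega
  rw [contCount, hset, Set.ncard_image_of_injective _ ?_]
  · rfl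
  · intro a b h
    simp only [Prod.mk.injEq] at h
    omega

lemma size_lb {lam : ℕ → ℕ} (hl : IsPartitionFun lam)
    (hfin : (Function.support lam).Finite) {c : ℤ} (hD : D lam c ≠ 0) :
    c.natAbs + 1 ≤ ∑ᶠ i, lam i := by
  obtain ⟨t, ht⟩ := Set.nonempty_of_ncard_ne_zero hD
  have hj := col_lt hfin ht
  have hr := row_lt hl hfin (lt_of_le_of_lt (Nat.zero_le _) ht)
  omega

lemma D_mono {lam : ℕ → ℕ} (hl : IsPartitionFun lam)
    (hfin : (Function.support lam).Finite) {c c' : ℤ}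
    (hcc : (0 ≤ c' ∧ c' ≤ c) ∨ (c ≤ c' ∧ c' ≤ 0)) (hD : D lam c ≠ 0) :
    D lam c' ≠ 0 := by
  obtain ⟨t, ht⟩ := Set.nonempty_of_ncard_ne_zero hD
  have h0 : 0 ∈ Dset lam c' := by
    show 0 + c'.toNat < lam (0 + (-c').toNat)
    have ha := anti hl (show 0 + (-c').toNat ≤ t + (-c).toNat by omega)
    simp only [Dset, Set.mem_setOf_eq] at ht
    omega
  have := (Set.ncard_pos (Dset_finite hfin c')).mpr ⟨0, h0⟩
  unfold D
  omega


end Stmt4Aux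

open Stmt4Aux

/-- Under the parameter hypotheses, multipartitions of `n` with equal contents
agree in every component other than `i` and `j`. -/
theorem stmt4 (n m : ℕ) (q : ℂ) (u : Fin m → ℂ) (hq : q ≠ 0) (hu : ∀ k, u k ≠ 0)
    (i j : Fin m) (hij : i ≠ j)
    (hrel : q ^ (n - 1) * u i = u j)
    (hother : ∀ k l : Fin m, k ≠ l → ({k, l} : Set (Fin m)) ≠ {i, j} →
      ∀ c : ℤ, -(n : ℤ) < c → c < (n : ℤ) → u k / u l ≠ q ^ c)
    (hord : OrderAtLeast q (2 * n - 1))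
    (α β : Fin m → ℕ → ℕ)
    (hα : IsMultipartitionOf α n) (hβ : IsMultipartitionOf β n)
    (hcont : ∀ z : ℂ, mcontCount α u q z = mcontCount β u q z) :
    ∀ k : Fin m, k ≠ i → k ≠ j → α k = β k := by
  intro k hki hkj
  obtain ⟨hαp, hαn⟩ := hα
  obtain ⟨hβp, hβn⟩ := hβ
  have sizele : ∀ (γ : Fin m → ℕ → ℕ), (∑ l, ∑ᶠ i', γ l i') = n →
      ∀ l : Fin m, ∑ᶠ i', γ l i' ≤ n := by
    intro γ hγ l
    rw [← hγ]
    exact Finset.single_le_sum (f := fun l => ∑ᶠ i', γ l i')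
      (fun _ _ => Nat.zero_le _) (Finset.mem_univ l)
  have pairle : ∀ (γ : Fin m → ℕ → ℕ), (∑ l, ∑ᶠ i', γ l i') = n →
      ∀ a b : Fin m, a ≠ b → ∑ᶠ i', γ a i' + ∑ᶠ i', γ b i' ≤ n := by
    intro γ hγ a b hab
    have h1 : ∑ l ∈ ({a, b} : Finset (Fin m)), ∑ᶠ i', γ l i' ≤
        ∑ l, ∑ᶠ i', γ l i' := Finset.sum_le_sum_of_subset (Finset.subset_univ _)
    rw [Finset.sum_pair hab] at h1
    omega
  have cross : ∀ (γ : Fin m → ℕ → ℕ),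
      (∀ l, IsPartitionFun (γ l) ∧ (Function.support (γ l)).Finite) →
      ∀ l : Fin m, l ≠ k → ∀ c : ℤ,
      contCount (γ l) (u l) q (u k * q ^ c) ≠ 0 →
      (n : ℤ) - c.natAbs + 1 ≤ ((∑ᶠ i', γ l i' : ℕ) : ℤ) := by
    intro γ hγp l hlk c h
    obtain ⟨⟨r0, j0⟩, hp⟩ := Set.nonempty_of_ncard_ne_zero h
    simp only [Set.mem_setOf_eq] at hp
    have hj := col_lt (hγp l).2 hp.1
    have hr := row_lt (hγp l).1 (hγp l).2 (lt_of_le_of_lt (Nat.zero_le _) hp.1)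
    have h1 : u l * q ^ ((j0 : ℤ) - (r0 : ℤ)) = u k * q ^ c := hp.2
    have hukl : u k / u l = q ^ (((j0 : ℤ) - r0) - c) := by
      rw [zpow_sub₀ hq, div_eq_div_iff (hu l) (zpow_ne_zero _ hq)]
      linear_combination -h1
    have hset : ({k, l} : Set (Fin m)) ≠ {i, j} := by
      intro hEq
      have hk : k ∈ ({i, j} : Set (Fin m)) := by
        rw [← hEq]; exact Set.mem_insert _ _
      simp only [Set.mem_insert_iff, Set.mem_singleton_iff] at hk
      tauto
    have hfar : ¬(-(n : ℤ) < ((j0 : ℤ) - r0) - c ∧ ((j0 : ℤ) - r0) - c < n) := by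
      rintro ⟨ha, hb⟩
      exact hother k l (Ne.symm hlk) hset _ ha hb hukl
    push_neg at hfar
    omega
  have hpak := hαp k
  have hpbk := hβp k
  have key : ∀ c : ℤ, D (α k) c = D (β k) c := by
    have H : ∀ N : ℕ, ∀ c : ℤ, c.natAbs = N → D (α k) c = D (β k) c := by
      intro N
      induction N using Nat.strong_induction_on with
      | _ N ih =>
        intro c hc
        by_cases hbig : n ≤ c.natAbs
        · have h1 : D (α k) c = 0 := by
            by_contra h
            have := size_lb hpak.1 hpak.2 h
            have := sizele α hαn k
            omega
          have h2 : D (β k) c = 0 := by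
            by_contra h
            have := size_lb hpbk.1 hpbk.2 h
            have := sizele β hβn k
            omega
          rw [h1, h2]
        · push_neg at hbig
          by_cases hcr : ∀ l, l ≠ k → contCount (α l) (u l) q (u k * q ^ c) = 0 ∧
              contCount (β l) (u l) q (u k * q ^ c) = 0
          · have hz := hcont (u k * q ^ c)
            unfold mcontCount at hz
            rw [Finset.sum_eq_single_of_mem k (Finset.mem_univ k)
                  (fun b _ hb => (hcr b hb).1),
                Finset.sum_eq_single_of_mem k (Finset.mem_univ k)
                  (fun b _ hb => (hcr b hb).2)] at hz
            rwa [contCount_eq hq (hu k) hord hpak.1 hpak.2 (sizele α hαn k) c hbig,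
                 contCount_eq hq (hu k) hord hpbk.1 hpbk.2 (sizele β hβn k) c hbig] at hz
          · push_neg at hcr
            obtain ⟨l, hlk, hor⟩ := hcr
            have hsmall : (∑ᶠ i', α k i' ≤ c.natAbs - 1 ∧ 1 ≤ c.natAbs) ∨
                (∑ᶠ i', β k i' ≤ c.natAbs - 1 ∧ 1 ≤ c.natAbs) := by
              rcases Classical.em (contCount (α l) (u l) q (u k * q ^ c) = 0) with hA | h
              case inr =>
                left
                have h4 := cross α hαp l hlk c h
                have h5 := pairle α hαn k l (Ne.symm hlk)
                have h6 := sizele α hαn l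
                omega
              case inl =>
                right
                have h := hor hA
                have h4 := cross β hβp l hlk c h
                have h5 := pairle β hβn k l (Ne.symm hlk)
                have h6 := sizele β hβn l
                omega
            have hc1 : 1 ≤ c.natAbs := by
              rcases hsmall with ⟨_, h⟩ | ⟨_, h⟩ <;> exact h
            set c' : ℤ := if 0 ≤ c then c - 1 else c + 1 with hc'def
            have hcc : (0 ≤ c' ∧ c' ≤ c) ∨ (c ≤ c' ∧ c' ≤ 0) := by
              rw [hc'def]; split <;> omega
            have habs : c'.natAbs = c.natAbs - 1 := by
              rw [hc'def]; split <;> omega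
            have hih := ih (c.natAbs - 1) (by omega) c' habs
            rcases hsmall with ⟨hsk, _⟩ | ⟨hsk, _⟩
            · have hDα : D (α k) c = 0 := by
                by_contra h
                have := size_lb hpak.1 hpak.2 h
                omega
              have hDα' : D (α k) c' = 0 := by
                by_contra h
                have := size_lb hpak.1 hpak.2 h
                omega
              have hDβ : D (β k) c = 0 := by
                by_contra h
                have h7 := D_mono hpbk.1 hpbk.2 hcc h
                omega
              rw [hDα, hDβ]
            · have hDβ : D (β k) c = 0 := by
                by_contra h
                have := size_lb hpbk.1 hpbk.2 h
                omega
              have hDβ' : D (β k) c' = 0 := by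
                by_contra h
                have := size_lb hpbk.1 hpbk.2 h
                omega
              have hDα : D (α k) c = 0 := by
                by_contra h
                have h7 := D_mono hpak.1 hpak.2 hcc h
                omega
              rw [hDα, hDβ]
    exact fun c => H c.natAbs c rfl
  funext r
  have crit : ∀ jj : ℕ, jj < α k r ↔ jj < β k r := by
    intro jj
    rw [cell_iff hpak.1 hpak.2 r jj, cell_iff hpbk.1 hpbk.2 r jj, key]
  have h1 := crit (α k r)
  have h2 := crit (β k r)
  omega
end

section
/- With the parameter hypotheses as before (q^(n-1)·u_i = u_j, i ≠ j, no other relation u_k/u_ℓ = q^c with -n < c < n, order of q at least 2n-1), two multipartitions α, β of n have equal content if and only if either α = β, or both α and β are of the form λ_a (a row of a boxes in position i, a column of n-a boxes in position j, empty elsewhere) for some 0 ≤ a ≤ n. -/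
/-! ### Partition basics -/

/-- A good partition: partition function with finite support. -/
def GoodP (lam : ℕ → ℕ) : Prop := IsPartitionFun lam ∧ (Function.support lam).Finite

lemma GoodP.antitone {lam : ℕ → ℕ} (h : GoodP lam) : Antitone lam :=
  antitone_nat_of_succ_le h.1

/-- downward closed finsets of ℕ are ranges -/
lemma dc_finset_mem {s : Finset ℕ} (hdc : ∀ x ∈ s, ∀ y, y ≤ x → y ∈ s) (x : ℕ) :
    x ∈ s ↔ x < s.card := by
  constructor
  · intro hx
    by_contra h
    push_neg at h
    have hsub : Finset.range (x + 1) ⊆ s := by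
      intro y hy
      exact hdc x hx y (Nat.lt_succ_iff.mp (Finset.mem_range.mp hy))
    have := Finset.card_le_card hsub
    simp at this
    omega
  · intro hx
    by_contra h
    have hsub : s ⊆ Finset.range x := by
      intro y hy
      rw [Finset.mem_range]
      by_contra hy'
      push_neg at hy'
      exact h (hdc y hy x hy')
    have := Finset.card_le_card hsub
    simp at this
    omega

noncomputable def nrows (lam : ℕ → ℕ) (h : (Function.support lam).Finite) : ℕ :=
  h.toFinset.card

lemma nrows_spec {lam : ℕ → ℕ} (h : GoodP lam) (r : ℕ) :
    lam r ≠ 0 ↔ r < nrows lam h.2 := by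
  have hdc : ∀ x ∈ h.2.toFinset, ∀ y, y ≤ x → y ∈ h.2.toFinset := by
    intro x hx y hy
    simp only [Set.Finite.mem_toFinset, Function.mem_support] at *
    have := h.antitone hy
    omega
  have := dc_finset_mem hdc r
  simp only [Set.Finite.mem_toFinset, Function.mem_support] at this
  exact this.trans Iff.rfl

noncomputable def psize (lam : ℕ → ℕ) : ℕ := ∑ᶠ i, lam i

lemma psize_eq_sum_range {lam : ℕ → ℕ} (h : GoodP lam) {R : ℕ}
    (hR : nrows lam h.2 ≤ R) : psize lam = ∑ r ∈ Finset.range R, lam r := by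
  apply finsum_eq_sum_of_support_subset
  intro x hx
  simp only [Function.mem_support] at hx
  have := (nrows_spec h x).mp hx
  simp only [Finset.coe_range, Set.mem_Iio]
  omega

lemma nrows_le_psize {lam : ℕ → ℕ} (h : GoodP lam) : nrows lam h.2 ≤ psize lam := by
  rw [psize_eq_sum_range h (le_refl _)]
  calc nrows lam h.2 = ∑ r ∈ Finset.range (nrows lam h.2), 1 := by simp
  _ ≤ _ := Finset.sum_le_sum (fun r hr => by
      have := (nrows_spec h r).mpr (Finset.mem_range.mp hr); omega)

lemma row_lt_psize {lam : ℕ → ℕ} (h : GoodP lam) {r : ℕ} (hr : lam r ≠ 0) :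
    r < psize lam := lt_of_lt_of_le ((nrows_spec h r).mp hr) (nrows_le_psize h)

lemma lam_le_psize {lam : ℕ → ℕ} (h : GoodP lam) (r : ℕ) : lam r ≤ psize lam := by
  rcases Nat.eq_zero_or_pos (lam r) with h0 | h0
  · omega
  · have hr : r < nrows lam h.2 := (nrows_spec h r).mp (by omega)
    rw [psize_eq_sum_range h (le_refl _)]
    exact Finset.single_le_sum (f := fun t => lam t) (fun _ _ => Nat.zero_le _)
      (Finset.mem_range.mpr hr)

lemma psize_zero_iff {lam : ℕ → ℕ} (h : GoodP lam) : psize lam = 0 ↔ lam = 0 := by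
  constructor
  · intro h0
    funext r
    have := lam_le_psize h r
    simp; omega
  · intro h0; subst h0; simp [psize]

/-! ### Boxes and diagonal counts -/

noncomputable def boxesP (lam : ℕ → ℕ) : Finset (ℕ × ℕ) :=
  ((Finset.range (psize lam)) ×ˢ (Finset.range (psize lam))).filter fun p => p.2 < lam p.1

lemma mem_boxesP {lam : ℕ → ℕ} (h : GoodP lam) (p : ℕ × ℕ) :
    p ∈ boxesP lam ↔ p.2 < lam p.1 := by
  simp only [boxesP, Finset.mem_filter, Finset.mem_product, Finset.mem_range]
  constructor
  · tauto
  · intro hp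
    refine ⟨⟨row_lt_psize h (by omega), ?_⟩, hp⟩
    have h1 : lam p.1 ≤ lam 0 := h.antitone (Nat.zero_le _)
    have := lam_le_psize h 0
    omega

lemma card_boxesP {lam : ℕ → ℕ} (h : GoodP lam) : (boxesP lam).card = psize lam := by
  have hnr : nrows lam h.2 ≤ psize lam := nrows_le_psize h
  rw [psize_eq_sum_range h hnr]
  rw [Finset.card_eq_sum_card_fiberwise (f := Prod.fst) (t := Finset.range (psize lam))
    (fun p hp => by
      simp only [Finset.mem_coe, boxesP, Finset.mem_filter, Finset.mem_product, Finset.mem_range] at hp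
      exact Finset.mem_range.mpr hp.1.1)]
  apply Finset.sum_congr rfl
  intro r _
  have heq : Finset.filter (fun p => p.1 = r) (boxesP lam)
      = (Finset.range (lam r)).image (fun c => (r, c)) := by
    ext p
    simp only [Finset.mem_filter, Finset.mem_image, Finset.mem_range, mem_boxesP h]
    constructor
    · rintro ⟨h1, h2⟩
      subst h2
      exact ⟨p.2, h1, Prod.mk.eta⟩
    · rintro ⟨c, hc, rfl⟩
      exact ⟨hc, rfl⟩
  rw [heq, Finset.card_image_of_injective _ (fun a b hab => by simpa using hab)]
  simp

noncomputable def ccnt (lam : ℕ → ℕ) (c : ℤ) : ℕ :=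
  ((boxesP lam).filter fun p => (p.2 : ℤ) - (p.1 : ℤ) = c).card

/-! ### ccnt support and injectivity -/

lemma ccnt_ne_zero_iff {lam : ℕ → ℕ} (h : GoodP lam) (c : ℤ) :
    ccnt lam c ≠ 0 ↔ (-(nrows lam h.2 : ℤ) < c ∧ c < lam 0) := by
  rw [ccnt, ← Nat.pos_iff_ne_zero, Finset.card_pos]
  constructor
  · rintro ⟨p, hp⟩
    rw [Finset.mem_filter, mem_boxesP h] at hp
    obtain ⟨h1, h2⟩ := hp
    have hr : p.1 < nrows lam h.2 := (nrows_spec h p.1).mp (by omega)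
    have hl : lam p.1 ≤ lam 0 := h.antitone (Nat.zero_le _)
    constructor <;> [skip; skip] <;> omega
  · rintro ⟨h1, h2⟩
    rcases le_or_gt 0 c with hc | hc
    · refine ⟨(0, c.toNat), ?_⟩
      rw [Finset.mem_filter, mem_boxesP h]
      constructor
      · simp; omega
      · simp; omega
    · refine ⟨((-c).toNat, 0), ?_⟩
      rw [Finset.mem_filter, mem_boxesP h]
      have : lam (-c).toNat ≠ 0 := by
        rw [nrows_spec h]; omega
      constructor
      · simp; omega
      · simp; omega

lemma ccnt_eq_card_rows {lam : ℕ → ℕ} (h : GoodP lam) (c : ℤ) :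
    ccnt lam c = ((Finset.range (psize lam)).filter
      (fun (r : ℕ) => 0 ≤ (r : ℤ) + c ∧ (r : ℤ) + c < lam r)).card := by
  rw [ccnt]
  apply Finset.card_bij (fun p _ => p.1)
  · intro p hp
    rw [Finset.mem_filter, mem_boxesP h] at hp
    obtain ⟨h1, h2⟩ := hp
    rw [Finset.mem_filter, Finset.mem_range]
    refine ⟨row_lt_psize h (by omega), by omega, by omega⟩
  · intro p hp p' hp' hpp
    rw [Finset.mem_filter, mem_boxesP h] at hp hp'
    have h1 : p.1 = p'.1 := by exact_mod_cast hpp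
    have h2 : p.2 = p'.2 := by omega
    exact Prod.ext h1 h2
  · intro r hr
    rw [Finset.mem_filter, Finset.mem_range] at hr
    obtain ⟨h1, h2, h3⟩ := hr
    refine ⟨(r, ((r : ℤ) + c).toNat), ?_, rfl⟩
    rw [Finset.mem_filter, mem_boxesP h]
    constructor
    · show ((r : ℤ) + c).toNat < lam r
      omega
    · show ((((r : ℤ) + c).toNat : ℤ)) - (r : ℤ) = c
      omega

lemma rows_dc_card {lam : ℕ → ℕ} (h : GoodP lam) (c : ℤ) (R : ℕ) :
    ∀ r < R, ((r : ℤ) + c < lam r ↔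
      r < ((Finset.range R).filter (fun (r' : ℕ) => (r' : ℤ) + c < lam r')).card) := by
  intro r hr
  have hdc : ∀ x ∈ (Finset.range R).filter (fun (r' : ℕ) => (r' : ℤ) + c < lam r'),
      ∀ y, y ≤ x → y ∈ (Finset.range R).filter (fun (r' : ℕ) => (r' : ℤ) + c < lam r') := by
    intro x hx y hy
    rw [Finset.mem_filter, Finset.mem_range] at hx ⊢
    have := h.antitone hy
    refine ⟨by omega, by omega⟩
  have := dc_finset_mem hdc r
  rw [Finset.mem_filter, Finset.mem_range] at this
  constructor
  · intro hcond; exact this.mp ⟨hr, hcond⟩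
  · intro hcard; exact (this.mpr hcard).2

lemma card_B_eq_of_nonneg {lam : ℕ → ℕ} (h : GoodP lam) {c : ℤ} (hc : 0 ≤ c) (R : ℕ)
    (hR : psize lam ≤ R) :
    ((Finset.range R).filter (fun (r' : ℕ) => (r' : ℤ) + c < lam r')).card = ccnt lam c := by
  rw [ccnt_eq_card_rows h]
  congr 1
  ext r
  rw [Finset.mem_filter, Finset.mem_filter, Finset.mem_range, Finset.mem_range]
  constructor
  · rintro ⟨h1, h2⟩
    have : lam r ≠ 0 := by omega
    exact ⟨row_lt_psize h this, by omega, h2⟩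
  · rintro ⟨h1, h2, h3⟩
    exact ⟨by omega, h3⟩

lemma card_B_eq_of_neg {lam : ℕ → ℕ} (h : GoodP lam) {c : ℤ} (hc : c < 0) (R : ℕ)
    (hR : psize lam ≤ R) (hR2 : (-c).toNat ≤ R) :
    ((Finset.range R).filter (fun (r' : ℕ) => (r' : ℤ) + c < lam r')).card
      = ccnt lam c + (-c).toNat := by
  classical
  set B := (Finset.range R).filter (fun (r' : ℕ) => (r' : ℤ) + c < lam r') with hB
  have hsplit := Finset.card_filter_add_card_filter_not
    (s := B) (p := fun r' => r' < (-c).toNat)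
  have h1 : B.filter (fun r' => r' < (-c).toNat) = Finset.range ((-c).toNat) := by
    ext r
    simp only [hB, Finset.mem_filter, Finset.mem_range]
    constructor
    · tauto
    · intro hr
      refine ⟨⟨by omega, by omega⟩, hr⟩
  have h2 : B.filter (fun r' => ¬ r' < (-c).toNat) = (Finset.range (psize lam)).filter
      (fun (r : ℕ) => 0 ≤ (r : ℤ) + c ∧ (r : ℤ) + c < lam r) := by
    ext r
    simp only [hB, Finset.mem_filter, Finset.mem_range, not_lt]
    constructor
    · rintro ⟨⟨hr1, hr2⟩, hr3⟩
      have : lam r ≠ 0 := by omega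
      exact ⟨row_lt_psize h this, by omega, hr2⟩
    · rintro ⟨h1', h2', h3'⟩
      exact ⟨⟨by omega, h3'⟩, by omega⟩
  rw [h1, h2] at hsplit
  rw [ccnt_eq_card_rows h]
  simp only [Finset.card_range] at hsplit
  omega

/-- Partitions are determined by their diagonal multiplicities. -/
lemma ccnt_inj {lam mu : ℕ → ℕ} (hl : GoodP lam) (hm : GoodP mu)
    (hc : ∀ c, ccnt lam c = ccnt mu c) : lam = mu := by
  funext r
  have key : ∀ v : ℕ, v < lam r ↔ v < mu r := by
    intro v
    set c : ℤ := (v : ℤ) - r with hcdef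
    set R : ℕ := max (max (psize lam) (psize mu)) (r + 1) with hRdef
    have hrR : r < R := by omega
    have hRl : psize lam ≤ R := by omega
    have hRm : psize mu ≤ R := by omega
    have hl1 := rows_dc_card hl c R r hrR
    have hm1 := rows_dc_card hm c R r hrR
    have hcond : ((r : ℤ) + c < lam r ↔ v < lam r) := by constructor <;> (intro; omega)
    have hcond' : ((r : ℤ) + c < mu r ↔ v < mu r) := by constructor <;> (intro; omega)
    rcases le_or_gt (0 : ℤ) c with hc0 | hc0
    · rw [card_B_eq_of_nonneg hl hc0 R hRl] at hl1
      rw [card_B_eq_of_nonneg hm hc0 R hRm] at hm1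
      rw [← hcond, ← hcond', hl1, hm1, hc c]
    · have hR2 : (-c).toNat ≤ R := by omega
      rw [card_B_eq_of_neg hl hc0 R hRl hR2] at hl1
      rw [card_B_eq_of_neg hm hc0 R hRm hR2] at hm1
      rw [← hcond, ← hcond', hl1, hm1, hc c]
  have h1 := key (mu r)
  have h2 := key (lam r)
  omega

/-! ### Row / column recognition -/

lemma row_recog {lam : ℕ → ℕ} (h : GoodP lam) (hneg : ∀ c : ℤ, c < 0 → ccnt lam c = 0) :
    lam = fun r => if r = 0 then lam 0 else 0 := by
  funext r
  rcases Nat.eq_zero_or_pos r with rfl | hr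
  · simp
  · simp only [if_neg (by omega : ¬ r = 0)]
    by_contra h0
    have h1 : lam 1 ≠ 0 := by
      have := h.antitone (show 1 ≤ r by omega); omega
    have h2 : 1 < nrows lam h.2 := (nrows_spec h 1).mp h1
    have h3 : ccnt lam (-1) ≠ 0 := by
      rw [ccnt_ne_zero_iff h]
      have h4 : lam 0 ≠ 0 := by have := h.antitone (Nat.zero_le 1); omega
      omega
    exact h3 (hneg (-1) (by omega))

lemma col_recog {lam : ℕ → ℕ} (h : GoodP lam) (hpos : ∀ c : ℤ, 0 < c → ccnt lam c = 0) :
    lam = fun r => if r < nrows lam h.2 then 1 else 0 := by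
  have hlam0 : lam 0 ≤ 1 := by
    by_contra h0
    have h3 : ccnt lam 1 ≠ 0 := by
      rw [ccnt_ne_zero_iff h]
      constructor <;> omega
    exact h3 (hpos 1 (by omega))
  funext r
  by_cases hr : r < nrows lam h.2
  · simp only [if_pos hr]
    have h1 : lam r ≠ 0 := (nrows_spec h r).mpr hr
    have h2 : lam r ≤ lam 0 := h.antitone (Nat.zero_le _)
    omega
  · simp only [if_neg hr]
    by_contra h0
    exact hr ((nrows_spec h r).mp h0)

lemma psize_row (a : ℕ) : psize (fun r => if r = 0 then a else 0) = a := by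
  rw [psize, finsum_eq_sum_of_support_subset _ (s := {0})]
  · simp
  · intro x hx
    simp only [Function.mem_support] at hx
    by_contra h
    simp only [Finset.coe_singleton, Set.mem_singleton_iff] at h
    rw [if_neg h] at hx
    exact hx rfl

lemma psize_col (L : ℕ) : psize (fun r => if r < L then 1 else 0) = L := by
  rw [psize, finsum_eq_sum_of_support_subset _ (s := Finset.range L)]
  · rw [Finset.sum_ite_of_true (by intro i hi; exact Finset.mem_range.mp hi)]
    simp
  · intro x hx
    simp only [Function.mem_support] at hx
    simp only [Finset.coe_range, Set.mem_Iio]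
    by_contra h
    rw [if_neg h] at hx
    exact hx rfl

/-! ### contCount via boxes and diagonals -/

lemma contCount_eq_card {lam : ℕ → ℕ} (h : GoodP lam) (u q z : ℂ) :
    contCount lam u q z = ((boxesP lam).filter fun p => resid u q p.1 p.2 = z).card := by
  rw [contCount, ← Set.ncard_coe_finset]
  congr 1
  ext p
  simp only [Set.mem_setOf_eq, Finset.coe_filter, Finset.mem_filter, mem_boxesP h]

lemma resid_eq_of_diag {u q : ℂ} {p : ℕ × ℕ} {c : ℤ} (hdiag : (p.2 : ℤ) - (p.1 : ℤ) = c) :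
    resid u q p.1 p.2 = u * q ^ c := by rw [resid, hdiag]

lemma ccnt_le_contCount {lam : ℕ → ℕ} (h : GoodP lam) {u q z : ℂ} {c : ℤ}
    (hz : u * q ^ c = z) : ccnt lam c ≤ contCount lam u q z := by
  rw [contCount_eq_card h, ccnt]
  apply Finset.card_le_card
  intro p hp
  rw [Finset.mem_filter] at hp ⊢
  exact ⟨hp.1, by rw [resid_eq_of_diag hp.2, hz]⟩

lemma contCount_cover {lam : ℕ → ℕ} (h : GoodP lam) {u q z : ℂ}
    (hne : contCount lam u q z ≠ 0) : ∃ c : ℤ, ccnt lam c ≠ 0 ∧ u * q ^ c = z := by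
  rw [contCount_eq_card h, ← Nat.pos_iff_ne_zero, Finset.card_pos] at hne
  obtain ⟨p, hp⟩ := hne
  rw [Finset.mem_filter] at hp
  refine ⟨(p.2 : ℤ) - (p.1 : ℤ), ?_, by rw [← resid_eq_of_diag rfl, hp.2]⟩
  rw [ccnt, ← Nat.pos_iff_ne_zero, Finset.card_pos]
  exact ⟨p, Finset.mem_filter.mpr ⟨hp.1, rfl⟩⟩

lemma contCount_eq_ccnt {lam : ℕ → ℕ} (h : GoodP lam) {u q z : ℂ} {c : ℤ}
    (hz : u * q ^ c = z)
    (huniq : ∀ c', ccnt lam c' ≠ 0 → u * q ^ c' = z → c' = c) :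
    contCount lam u q z = ccnt lam c := by
  rw [contCount_eq_card h, ccnt]
  congr 1
  ext p
  rw [Finset.mem_filter, Finset.mem_filter]
  constructor
  · rintro ⟨h1, h2⟩
    refine ⟨h1, ?_⟩
    have hmem : ccnt lam ((p.2 : ℤ) - p.1) ≠ 0 := by
      rw [ccnt, ← Nat.pos_iff_ne_zero, Finset.card_pos]
      exact ⟨p, Finset.mem_filter.mpr ⟨h1, rfl⟩⟩
    exact huniq _ hmem (by rw [← resid_eq_of_diag rfl, h2])
  · rintro ⟨h1, h2⟩
    exact ⟨h1, by rw [resid_eq_of_diag h2, hz]⟩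

lemma contCount_eq_zero {lam : ℕ → ℕ} (h : GoodP lam) {u q z : ℂ}
    (hnone : ∀ c', ccnt lam c' ≠ 0 → u * q ^ c' ≠ z) :
    contCount lam u q z = 0 := by
  by_contra hne
  obtain ⟨c, hc1, hc2⟩ := contCount_cover h hne
  exact hnone c hc1 hc2

/-! ### arithmetic of q powers -/

lemma qinj {q : ℂ} (hq : q ≠ 0) {n : ℕ} (hord : OrderAtLeast q (2 * n - 1)) (hn : 2 ≤ n)
    {t : ℤ} (h1 : q ^ t = 1) (h2 : |t| ≤ 2 * (n : ℤ) - 2) : t = 0 := by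
  obtain ⟨h2a, h2b⟩ := abs_le.mp h2
  by_contra ht
  have key : ∀ s : ℕ, 0 < s → (s : ℤ) ≤ 2 * (n : ℤ) - 2 → q ^ (s : ℤ) = 1 → False := by
    intro s hs1 hs2 hs3
    have : q ^ s ≠ 1 := hord s hs1 (by omega)
    rw [zpow_natCast] at hs3
    exact this hs3
  rcases lt_or_gt_of_ne ht with h | h
  · have h3 : q ^ ((-t).toNat : ℤ) = 1 := by
      rw [show ((-t).toNat : ℤ) = -t by omega, zpow_neg, h1]
      simp
    exact key (-t).toNat (by omega) (by omega) h3
  · have h3 : q ^ ((t).toNat : ℤ) = 1 := by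
      rw [show ((t).toNat : ℤ) = t by omega]; exact h1
    exact key t.toNat (by omega) (by omega) h3

lemma qpow_cancel {q : ℂ} (hq : q ≠ 0) {w : ℂ} (hw : w ≠ 0) {a b : ℤ}
    (h : w * q ^ a = w * q ^ b) : q ^ (a - b) = 1 := by
  have h1 : q ^ a = q ^ b := mul_left_cancel₀ hw h
  rw [zpow_sub₀ hq, h1]
  exact div_self (zpow_ne_zero _ hq)

lemma ratio_eq {u v q : ℂ} (hv : v ≠ 0) (hq : q ≠ 0) {a b : ℤ} (h : u * q ^ a = v * q ^ b) :
    u / v = q ^ (b - a) := by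
  have hqa : q ^ a ≠ 0 := zpow_ne_zero _ hq
  rw [div_eq_iff hv, zpow_sub₀ hq, div_mul_eq_mul_div, eq_div_iff hqa, mul_comm (u) (q^a)]
  rw [mul_comm] at h
  rw [h]
  ring

/-! ### content counts of rows and columns -/

lemma contCount_rowfun (u q z : ℂ) (a : ℕ) :
    contCount (fun r => if r = 0 then a else 0) u q z
      = ((Finset.range a).filter fun (c : ℕ) => u * q ^ (c : ℤ) = z).card := by
  rw [contCount]
  have hset : {p : ℕ × ℕ | p.2 < (fun r => if r = 0 then a else 0) p.1
      ∧ resid u q p.1 p.2 = z}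
      = ↑(((Finset.range a).filter fun (c : ℕ) => u * q ^ (c : ℤ) = z).image
          (fun c => ((0 : ℕ), c))) := by
    ext p
    simp only [Set.mem_setOf_eq, Finset.coe_image, Set.mem_image, Finset.mem_coe,
      Finset.mem_filter, Finset.mem_range]
    constructor
    · rintro ⟨h1, h2⟩
      have hp1 : p.1 = 0 := by
        by_contra h0
        rw [if_neg h0] at h1; omega
      rw [if_pos hp1] at h1
      refine ⟨p.2, ⟨h1, ?_⟩, Prod.ext hp1.symm rfl⟩
      rw [← h2, resid, hp1]
      norm_num
    · rintro ⟨c, ⟨hc1, hc2⟩, rfl⟩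
      refine ⟨by simpa using hc1, ?_⟩
      rw [resid, ← hc2]
      norm_num
  rw [hset, Set.ncard_coe_finset]
  exact Finset.card_image_of_injective _ (fun x y hxy => by simpa using hxy)

lemma contCount_colfun (u q z : ℂ) (L : ℕ) :
    contCount (fun r => if r < L then 1 else 0) u q z
      = ((Finset.range L).filter fun (r : ℕ) => u * q ^ (-(r : ℤ)) = z).card := by
  rw [contCount]
  have hset : {p : ℕ × ℕ | p.2 < (fun r => if r < L then 1 else 0) p.1
      ∧ resid u q p.1 p.2 = z}
      = ↑(((Finset.range L).filter fun (r : ℕ) => u * q ^ (-(r : ℤ)) = z).image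
          (fun r => (r, (0 : ℕ)))) := by
    ext p
    simp only [Set.mem_setOf_eq, Finset.coe_image, Set.mem_image, Finset.mem_coe,
      Finset.mem_filter, Finset.mem_range]
    constructor
    · rintro ⟨h1, h2⟩
      have hp1 : p.1 < L ∧ p.2 = 0 := by
        by_cases h0 : p.1 < L
        · rw [if_pos h0] at h1; omega
        · rw [if_neg h0] at h1; omega
      refine ⟨p.1, ⟨hp1.1, ?_⟩, Prod.ext rfl hp1.2.symm⟩
      rw [← h2, resid, hp1.2]
      norm_num
    · rintro ⟨r, ⟨hr1, hr2⟩, rfl⟩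
      refine ⟨by simp only [if_pos hr1]; omega, ?_⟩
      rw [resid, ← hr2]
      norm_num
  rw [hset, Set.ncard_coe_finset]
  exact Finset.card_image_of_injective _ (fun x y hxy => by simpa using hxy)

lemma contCount_zerofun (u q z : ℂ) : contCount (fun _ => 0) u q z = 0 := by
  rw [contCount]
  convert Set.ncard_empty (ℕ × ℕ) using 2
  ext p
  simp

/-! ### content of lamA -/

lemma mcont_lamA {m : ℕ} {q : ℂ} {u : Fin m → ℂ} (hq : q ≠ 0)
    {i j : Fin m} (hij : i ≠ j) {n : ℕ}
    (hrel : q ^ (n - 1) * u i = u j) (hn : 1 ≤ n) {a : ℕ} (ha : a ≤ n) (z : ℂ) :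
    mcontCount (lamA i j n a) u q z
      = ((Finset.range n).filter fun (s : ℕ) => u i * q ^ (s : ℤ) = z).card := by
  classical
  have hrelz : u j = u i * q ^ ((n : ℤ) - 1) := by
    rw [← hrel, mul_comm]
    congr 1
    rw [show ((n : ℤ) - 1) = ((n - 1 : ℕ) : ℤ) by omega, zpow_natCast]
  have hlami : lamA i j n a i = fun r => if r = 0 then a else 0 := by
    funext r; rw [lamA, if_pos rfl]
  have hlamj : lamA i j n a j = fun r => if r < n - a then 1 else 0 := by
    funext r; rw [lamA, if_neg (Ne.symm hij), if_pos rfl]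
  have hrow : contCount (lamA i j n a i) (u i) q z
      = ((Finset.range a).filter fun (c : ℕ) => u i * q ^ (c : ℤ) = z).card := by
    rw [hlami, contCount_rowfun]
  have hcol : contCount (lamA i j n a j) (u j) q z
      = ((Finset.Ico a n).filter fun (s : ℕ) => u i * q ^ (s : ℤ) = z).card := by
    rw [hlamj, contCount_colfun]
    apply Finset.card_bij (fun r _ => n - 1 - r)
    · intro r hr
      rw [Finset.mem_filter, Finset.mem_range] at hr
      rw [Finset.mem_filter, Finset.mem_Ico]
      refine ⟨by omega, ?_⟩
      rw [← hr.2, hrelz, mul_assoc, ← zpow_add₀ hq]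
      congr 2
      omega
    · intro r hr r' hr' hrr
      rw [Finset.mem_filter, Finset.mem_range] at hr hr'
      omega
    · intro s hs
      rw [Finset.mem_filter, Finset.mem_Ico] at hs
      refine ⟨n - 1 - s, ?_, by omega⟩
      rw [Finset.mem_filter, Finset.mem_range]
      refine ⟨by omega, ?_⟩
      rw [hrelz, mul_assoc, ← zpow_add₀ hq, ← hs.2]
      congr 2
      omega
  have hzero : ∀ k, k ≠ i → k ≠ j → contCount (lamA i j n a k) (u k) q z = 0 := by
    intro k hki hkj
    have hl : lamA i j n a k = fun _ => 0 := by
      funext r; rw [lamA, if_neg hki, if_neg hkj]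
    rw [hl, contCount_zerofun]
  rw [mcontCount]
  rw [← Finset.sum_subset (Finset.subset_univ ({i, j} : Finset (Fin m)))
    (fun k _ hk => by
      simp only [Finset.mem_insert, Finset.mem_singleton] at hk
      push_neg at hk
      exact hzero k hk.1 hk.2)]
  rw [Finset.sum_pair hij, hrow, hcol]
  rw [Finset.range_eq_Ico (a := n), ← Finset.Ico_union_Ico_eq_Ico (Nat.zero_le a) ha,
    Finset.filter_union, Finset.card_union_of_disjoint, ← Finset.range_eq_Ico]
  exact Finset.disjoint_filter_filter (Finset.Ico_disjoint_Ico_consecutive 0 a n)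

/-! ### multipartition-level machinery -/

lemma goodP_of_mp {m n : ℕ} {γ : Fin m → ℕ → ℕ} (hγ : IsMultipartitionOf γ n) (k : Fin m) :
    GoodP (γ k) := ⟨(hγ.1 k).1, (hγ.1 k).2⟩

lemma psize_le_n {m n : ℕ} {γ : Fin m → ℕ → ℕ} (hγ : IsMultipartitionOf γ n) (k : Fin m) :
    psize (γ k) ≤ n := by
  rw [← hγ.2]
  exact Finset.single_le_sum (f := fun k => psize (γ k)) (fun _ _ => Nat.zero_le _)
    (Finset.mem_univ k)

lemma psize_pair_le_n {m n : ℕ} {γ : Fin m → ℕ → ℕ} (hγ : IsMultipartitionOf γ n)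
    {k l : Fin m} (hkl : k ≠ l) : psize (γ k) + psize (γ l) ≤ n := by
  have htot : ∑ x, psize (γ x) = n := hγ.2
  rw [← htot, ← Finset.sum_erase_add _ _ (Finset.mem_univ l)]
  have h1 : psize (γ k) ≤ ∑ x ∈ Finset.univ.erase l, psize (γ x) :=
    Finset.single_le_sum (f := fun k => psize (γ k)) (fun _ _ => Nat.zero_le _)
      (Finset.mem_erase.mpr ⟨hkl, Finset.mem_univ k⟩)
  omega

lemma ccnt_window {lam : ℕ → ℕ} (h : GoodP lam) {c : ℤ} (hc : ccnt lam c ≠ 0) :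
    |c| ≤ (psize lam : ℤ) - 1 := by
  have h1 := (ccnt_ne_zero_iff h c).mp hc
  have h2 := nrows_le_psize h
  have h3 := lam_le_psize h 0
  rw [abs_le]
  omega

lemma ccnt_zero_ne_zero {lam : ℕ → ℕ} (h : GoodP lam) {c : ℤ} (hc : ccnt lam c ≠ 0) :
    ccnt lam 0 ≠ 0 := by
  have h1 := (ccnt_ne_zero_iff h c).mp hc
  have h2 : lam 0 ≠ 0 := by
    rcases le_or_gt 0 c with h' | h'
    · omega
    · exact (nrows_spec h 0).mpr (by omega)
  have h3 : 0 < nrows lam h.2 := by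
    have := (nrows_spec h 0).mp h2
    omega
  rw [ccnt_ne_zero_iff h]
  omega

section Machinery

variable {n m : ℕ} {q : ℂ} {u : Fin m → ℂ} {i j : Fin m}

/-- The two key hypotheses on parameters, in a convenient ℤ-power form. -/
structure Params (n m : ℕ) (q : ℂ) (u : Fin m → ℂ) (i j : Fin m) : Prop where
  hq : q ≠ 0
  hu : ∀ k, u k ≠ 0
  hij : i ≠ j
  hn : 2 ≤ n
  hrelz : u j = u i * q ^ ((n : ℤ) - 1)
  hother : ∀ k l : Fin m, k ≠ l → ({k, l} : Set (Fin m)) ≠ {i, j} →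
      ∀ c : ℤ, -(n : ℤ) < c → c < (n : ℤ) → u k / u l ≠ q ^ c
  hord : OrderAtLeast q (2 * n - 1)

lemma Params.qinj' (P : Params n m q u i j) {t : ℤ} (h1 : q ^ t = 1)
    (h2 : |t| ≤ 2 * (n : ℤ) - 2) : t = 0 := qinj P.hq P.hord P.hn h1 h2

/-- Distinct components of one multipartition have disjoint residue sets. -/
lemma Params.disj (P : Params n m q u i j) {γ : Fin m → ℕ → ℕ}
    (hγ : IsMultipartitionOf γ n) {k l : Fin m} (hkl : k ≠ l) {c c' : ℤ}
    (hc : ccnt (γ k) c ≠ 0) (hc' : ccnt (γ l) c' ≠ 0) :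
    u k * q ^ c ≠ u l * q ^ c' := by
  intro heq
  have hwk := ccnt_window (goodP_of_mp hγ k) hc
  have hwl := ccnt_window (goodP_of_mp hγ l) hc'
  have hpair := psize_pair_le_n hγ hkl
  have hck : |c| ≤ (psize (γ k) : ℤ) - 1 := hwk
  have hcl : |c'| ≤ (psize (γ l) : ℤ) - 1 := hwl
  have habs : |c - c'| ≤ (n : ℤ) - 2 := by
    rw [abs_le] at *
    omega
  by_cases hset : ({k, l} : Set (Fin m)) = {i, j}
  · rcases Set.pair_eq_pair_iff.mp hset with ⟨rfl, rfl⟩ | ⟨rfl, rfl⟩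
    · -- k = i, l = j
      rw [P.hrelz, mul_assoc, ← zpow_add₀ P.hq] at heq
      have := qpow_cancel P.hq (P.hu k) heq
      have ht := P.qinj' this (by rw [abs_le] at *; omega)
      rw [abs_le] at habs
      omega
    · -- k = j, l = i
      rw [P.hrelz, mul_assoc, ← zpow_add₀ P.hq] at heq
      have := qpow_cancel P.hq (P.hu l) heq.symm
      have ht := P.qinj' this (by rw [abs_le] at *; omega)
      rw [abs_le] at habs
      omega
  · have := ratio_eq (P.hu l) P.hq heq
    have habs' : -(n : ℤ) < c' - c ∧ c' - c < n := by rw [abs_le] at habs; omega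
    exact P.hother k l hkl hset (c' - c) habs'.1 habs'.2 this

/-- Within one component, distinct diagonals give distinct residues. -/
lemma Params.selfinj (P : Params n m q u i j) {lam : ℕ → ℕ} (h : GoodP lam)
    (hsize : psize lam ≤ n) {c c' : ℤ}
    (hc : ccnt lam c ≠ 0) (hc' : ccnt lam c' ≠ 0) {w : ℂ} (hw : w ≠ 0)
    (heq : w * q ^ c = w * q ^ c') : c = c' := by
  have h1 := qpow_cancel P.hq hw heq
  have hwk := ccnt_window h hc
  have hwl := ccnt_window h hc'
  have := P.qinj' h1 (by rw [abs_le] at *; omega)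
  omega

lemma Params.meval (P : Params n m q u i j) {γ : Fin m → ℕ → ℕ}
    (hγ : IsMultipartitionOf γ n) {k : Fin m} {c : ℤ} (hc : ccnt (γ k) c ≠ 0) :
    mcontCount γ u q (u k * q ^ c) = ccnt (γ k) c := by
  rw [mcontCount]
  rw [Finset.sum_eq_single_of_mem k (Finset.mem_univ k)]
  · exact contCount_eq_ccnt (goodP_of_mp hγ k) rfl
      (fun c' hc' heq => P.selfinj (goodP_of_mp hγ k) (psize_le_n hγ k) hc' hc (P.hu k) heq)
  · intro l _ hlk
    exact contCount_eq_zero (goodP_of_mp hγ l)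
      (fun c' hc' heq => P.disj hγ hlk hc' hc heq)

lemma mcover {γ : Fin m → ℕ → ℕ} (hγ : IsMultipartitionOf γ n) {q z : ℂ}
    (hne : mcontCount γ u q z ≠ 0) :
    ∃ k c, ccnt (γ k) c ≠ 0 ∧ u k * q ^ c = z := by
  rw [mcontCount] at hne
  obtain ⟨k, _, hk⟩ := Finset.exists_ne_zero_of_sum_ne_zero hne
  obtain ⟨c, hc1, hc2⟩ := contCount_cover (goodP_of_mp hγ k) hk
  exact ⟨k, c, hc1, hc2⟩

lemma mge {γ : Fin m → ℕ → ℕ} (hγ : IsMultipartitionOf γ n) {q z : ℂ} (k : Fin m) {c : ℤ}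
    (hz : u k * q ^ c = z) : ccnt (γ k) c ≤ mcontCount γ u q z := by
  rw [mcontCount]
  calc ccnt (γ k) c ≤ contCount (γ k) (u k) q z := ccnt_le_contCount (goodP_of_mp hγ k) hz
  _ ≤ _ := Finset.single_le_sum (f := fun l => contCount (γ l) (u l) q z)
      (fun _ _ => Nat.zero_le _) (Finset.mem_univ k)

/-- A finite set containing the support of the content counting function. -/
noncomputable def suppF (γ : Fin m → ℕ → ℕ) (u : Fin m → ℂ) (q : ℂ) : Finset ℂ :=
  Finset.univ.biUnion (fun k => (boxesP (γ k)).image (fun p => resid (u k) q p.1 p.2))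

lemma mem_suppF {γ : Fin m → ℕ → ℕ} (hγ : IsMultipartitionOf γ n) {q z : ℂ}
    (hne : mcontCount γ u q z ≠ 0) : z ∈ suppF γ u q := by
  obtain ⟨k, c, hc1, hc2⟩ := mcover hγ hne
  rw [ccnt, ← Nat.pos_iff_ne_zero, Finset.card_pos] at hc1
  obtain ⟨p, hp⟩ := hc1
  rw [Finset.mem_filter] at hp
  rw [suppF, Finset.mem_biUnion]
  refine ⟨k, Finset.mem_univ k, Finset.mem_image.mpr ⟨p, hp.1, ?_⟩⟩
  rw [resid_eq_of_diag hp.2, hc2]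

lemma card_suppF {γ : Fin m → ℕ → ℕ} (hγ : IsMultipartitionOf γ n) (q : ℂ) :
    (suppF γ u q).card ≤ n := by
  calc (suppF γ u q).card ≤ ∑ k, ((boxesP (γ k)).image
      (fun p => resid (u k) q p.1 p.2)).card := Finset.card_biUnion_le
  _ ≤ ∑ k, (boxesP (γ k)).card := Finset.sum_le_sum (fun k _ => Finset.card_image_le)
  _ = ∑ k, psize (γ k) := Finset.sum_congr rfl (fun k _ => card_boxesP (goodP_of_mp hγ k))
  _ = n := hγ.2

end Machinery

section Window

variable {n m : ℕ} {q : ℂ} {u : Fin m → ℂ} {i j : Fin m} {α : Fin m → ℕ → ℕ} {z0 : ℂ}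
  {lS rS : ℕ}

/-- A maximal arc of the support of the content function, around `z0`. -/
structure IsWindow (n : ℕ) {m : ℕ} (q : ℂ) (u : Fin m → ℂ) (α : Fin m → ℕ → ℕ)
    (z0 : ℂ) (lS rS : ℕ) : Prop where
  hz0 : z0 ≠ 0
  hin : ∀ e : ℤ, -(lS : ℤ) ≤ e → e ≤ rS → mcontCount α u q (z0 * q ^ e) ≠ 0
  hRstop : mcontCount α u q (z0 * q ^ ((rS : ℤ) + 1)) = 0
  hLstop : mcontCount α u q (z0 * q ^ (-(lS : ℤ) - 1)) = 0
  hlen : (lS : ℤ) + rS ≤ (n : ℤ) - 1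

lemma walk (P : Params n m q u i j) (W : IsWindow n q u α z0 lS rS)
    {γ : Fin m → ℕ → ℕ} (hγ : IsMultipartitionOf γ n)
    (hγF : ∀ z, mcontCount γ u q z = mcontCount α u q z)
    {k : Fin m} {c0 e0 : ℤ} (hc0 : ccnt (γ k) c0 ≠ 0)
    (hpt : u k * q ^ c0 = z0 * q ^ e0) (he1 : -(lS : ℤ) ≤ e0) (he2 : e0 ≤ rS) :
    ∀ c, ccnt (γ k) c ≠ 0 → (-(lS : ℤ) ≤ e0 + (c - c0) ∧ e0 + (c - c0) ≤ rS) := by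
  have hgood := goodP_of_mp hγ k
  have hbounds0 := (ccnt_ne_zero_iff hgood c0).mp hc0
  have hptd : ∀ d : ℤ, u k * q ^ (c0 + d) = z0 * q ^ (e0 + d) := by
    intro d
    rw [zpow_add₀ P.hq, zpow_add₀ P.hq, ← mul_assoc, ← mul_assoc, hpt]
  intro c hc
  have hbc := (ccnt_ne_zero_iff hgood c).mp hc
  rcases le_or_gt c0 c with hcc | hcc
  · have hup : ∀ d : ℕ, c0 + d ≤ c → e0 + d ≤ rS := by
      intro d
      induction d with
      | zero => intro _; push_cast; omega
      | succ t ih =>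
        intro hdc
        have h1 : e0 + t ≤ rS := ih (by push_cast at hdc ⊢; omega)
        have hmid : ccnt (γ k) (c0 + ((t : ℤ) + 1)) ≠ 0 := by
          rw [ccnt_ne_zero_iff hgood]
          push_cast at hdc
          omega
        have hne : mcontCount α u q (z0 * q ^ (e0 + ((t : ℤ) + 1))) ≠ 0 := by
          rw [← hγF]
          have := mge hγ k (hptd ((t : ℤ) + 1))
          omega
        by_contra hcon
        push_neg at hcon
        have heq : e0 + ((t : ℤ) + 1) = (rS : ℤ) + 1 := by push_cast at hcon ⊢; omega
        rw [heq] at hne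
        exact hne W.hRstop
    have := hup (c - c0).toNat (by omega)
    constructor
    · omega
    · have h2 : ((c - c0).toNat : ℤ) = c - c0 := by omega
      omega
  · have hdown : ∀ d : ℕ, c ≤ c0 - d → -(lS : ℤ) ≤ e0 - d := by
      intro d
      induction d with
      | zero => intro _; push_cast; omega
      | succ t ih =>
        intro hdc
        have h1 : -(lS : ℤ) ≤ e0 - t := ih (by push_cast at hdc ⊢; omega)
        have hmid : ccnt (γ k) (c0 + (-(t : ℤ) - 1)) ≠ 0 := by
          rw [ccnt_ne_zero_iff hgood]
          push_cast at hdc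
          omega
        have hne : mcontCount α u q (z0 * q ^ (e0 + (-(t : ℤ) - 1))) ≠ 0 := by
          rw [← hγF]
          have := mge hγ k (hptd (-(t : ℤ) - 1))
          omega
        by_contra hcon
        push_neg at hcon
        have heq : e0 + (-(t : ℤ) - 1) = -(lS : ℤ) - 1 := by push_cast at hcon ⊢; omega
        rw [heq] at hne
        exact hne W.hLstop
    have := hdown (c0 - c).toNat (by omega)
    constructor
    · have h2 : ((c0 - c).toNat : ℤ) = c0 - c := by omega
      omega
    · omega

lemma center (P : Params n m q u i j) (W : IsWindow n q u α z0 lS rS)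
    {γ : Fin m → ℕ → ℕ} (hγ : IsMultipartitionOf γ n)
    (hγF : ∀ z, mcontCount γ u q z = mcontCount α u q z)
    {k : Fin m} {c0 e0 : ℤ} (hc0 : ccnt (γ k) c0 ≠ 0)
    (hpt : u k * q ^ c0 = z0 * q ^ e0) (he1 : -(lS : ℤ) ≤ e0) (he2 : e0 ≤ rS) :
    ∃ ek : ℤ, u k = z0 * q ^ ek ∧ -(lS : ℤ) ≤ ek ∧ ek ≤ rS ∧
      (∀ c, ccnt (γ k) c ≠ 0 → (-(lS : ℤ) ≤ ek + c ∧ ek + c ≤ rS)) := by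
  have hzero : ccnt (γ k) 0 ≠ 0 := ccnt_zero_ne_zero (goodP_of_mp hγ k) hc0
  have hw := walk P W hγ hγF hc0 hpt he1 he2
  have huk : u k = z0 * q ^ (e0 - c0) := by
    have h1 : u k = u k * q ^ c0 * q ^ (-c0) := by
      rw [mul_assoc, ← zpow_add₀ P.hq]
      simp
    rw [h1, hpt, mul_assoc, ← zpow_add₀ P.hq,
      show e0 + -c0 = e0 - c0 from by ring]
  have h0 := hw 0 hzero
  refine ⟨e0 - c0, huk, by omega, by omega, ?_⟩
  intro c hc
  have := hw c hc
  constructor <;> omega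

lemma struct (P : Params n m q u i j) (W : IsWindow n q u α z0 lS rS)
    (hui : u i = z0 * q ^ (-(lS : ℤ))) (huj : u j = z0 * q ^ ((rS : ℤ)))
    (hsum : (lS : ℤ) + rS = (n : ℤ) - 1)
    {γ : Fin m → ℕ → ℕ} (hγ : IsMultipartitionOf γ n)
    (hγF : ∀ z, mcontCount γ u q z = mcontCount α u q z) :
    ∃ b, b ≤ n ∧ γ = lamA i j n b := by
  classical
  -- any component with a box in the window is i or j
  have hcomp : ∀ k (c e : ℤ), ccnt (γ k) c ≠ 0 → u k * q ^ c = z0 * q ^ e →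
      -(lS : ℤ) ≤ e → e ≤ rS → k = i ∨ k = j := by
    intro k c e hc hpt he1 he2
    by_contra hk
    push_neg at hk
    obtain ⟨ek, hek1, hek2, hek3, _⟩ := center P W hγ hγF hc hpt he1 he2
    have hpt2 : u k * q ^ (0 : ℤ) = u i * q ^ (ek + lS) := by
      rw [zpow_zero, mul_one, hek1, hui, mul_assoc, ← zpow_add₀ P.hq,
        show -(lS : ℤ) + (ek + lS) = ek from by ring]
    have hr := ratio_eq (P.hu i) P.hq hpt2
    have hne : ({k, i} : Set (Fin m)) ≠ {i, j} := by
      intro hset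
      rcases Set.pair_eq_pair_iff.mp hset with ⟨h1, h2⟩ | ⟨h1, h2⟩
      · exact P.hij (h2 ▸ h1 ▸ rfl)
      · exact hk.2 h1
    have := P.hother k i hk.1 hne (ek + lS) (by omega) (by omega)
    exact this (by simpa using hr)
  -- γ i is a row
  have hrowi : γ i = fun r => if r = 0 then γ i 0 else 0 := by
    apply row_recog (goodP_of_mp hγ i)
    intro c hcneg
    by_contra hcc
    have h0 : ccnt (γ i) 0 ≠ 0 := ccnt_zero_ne_zero (goodP_of_mp hγ i) hcc
    have hpt : u i * q ^ (0 : ℤ) = z0 * q ^ (-(lS : ℤ)) := by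
      rw [zpow_zero, mul_one, hui]
    have := walk P W hγ hγF h0 hpt (by omega) (by omega) c hcc
    omega
  -- γ j is a column
  have hcolj : γ j = fun r => if r < nrows (γ j) (goodP_of_mp hγ j).2 then 1 else 0 := by
    apply col_recog (goodP_of_mp hγ j)
    intro c hcpos
    by_contra hcc
    have h0 : ccnt (γ j) 0 ≠ 0 := ccnt_zero_ne_zero (goodP_of_mp hγ j) hcc
    have hpt : u j * q ^ (0 : ℤ) = z0 * q ^ ((rS : ℤ)) := by
      rw [zpow_zero, mul_one, huj]
    have := walk P W hγ hγF h0 hpt (by omega) (by omega) c hcc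
    omega
  set a := γ i 0 with ha
  set L := nrows (γ j) (goodP_of_mp hγ j).2 with hL
  have hpsi : psize (γ i) = a := by
    have h1 := psize_row a
    rw [← hrowi] at h1
    exact h1
  have hpsj : psize (γ j) = L := by
    have h1 := psize_col L
    rw [← hcolj] at h1
    exact h1
  have hnri : nrows (γ i) (goodP_of_mp hγ i).2 ≤ 1 := by
    by_contra h1
    push_neg at h1
    have h2 : γ i 1 ≠ 0 := (nrows_spec (goodP_of_mp hγ i) 1).mpr h1
    rw [hrowi] at h2
    simp at h2
  have hcolj0 : γ j 0 ≤ 1 := by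
    rw [hcolj]
    dsimp only
    split <;> omega
  -- coverage: n ≤ a + L
  have hcov : n ≤ a + L := by
    by_contra hcov
    push_neg at hcov
    have he1 : -(lS : ℤ) ≤ (a : ℤ) - lS := by omega
    have he2 : (a : ℤ) - lS ≤ rS := by omega
    have hne := W.hin _ he1 he2
    rw [← hγF] at hne
    obtain ⟨k1, c1, hc1, hp1⟩ := mcover hγ hne
    rcases hcomp k1 c1 _ hc1 hp1 he1 he2 with rfl | rfl
    · have hbnd := (ccnt_ne_zero_iff (goodP_of_mp hγ k1) c1).mp hc1
      have han : a ≤ n := by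
        have := lam_le_psize (goodP_of_mp hγ k1) 0
        have := psize_le_n hγ k1
        omega
      rw [hui, mul_assoc, ← zpow_add₀ P.hq] at hp1
      have hcan := qpow_cancel P.hq W.hz0 hp1.symm
      have hfin := P.qinj' hcan (by rw [abs_le]; constructor <;> omega)
      omega
    · have hbnd := (ccnt_ne_zero_iff (goodP_of_mp hγ k1) c1).mp hc1
      have hLn : L ≤ n := by
        have := nrows_le_psize (goodP_of_mp hγ k1)
        have := psize_le_n hγ k1
        omega
      have han : a ≤ n := by omega
      rw [huj, mul_assoc, ← zpow_add₀ P.hq] at hp1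
      have hcan := qpow_cancel P.hq W.hz0 hp1.symm
      have hfin := P.qinj' hcan (by rw [abs_le]; constructor <;> omega)
      omega
  have hab : a + L ≤ n := by
    have := psize_pair_le_n hγ P.hij
    omega
  have haL : a + L = n := by omega
  -- all other components vanish
  have hothers : ∀ k, k ≠ i → k ≠ j → γ k = 0 := by
    have htot : ∑ k, psize (γ k) = n := hγ.2
    have hsplit : ∑ k ∈ Finset.univ \ ({i, j} : Finset (Fin m)), psize (γ k)
        + ∑ k ∈ ({i, j} : Finset (Fin m)), psize (γ k) = ∑ k, psize (γ k) :=
      Finset.sum_sdiff (Finset.subset_univ _)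
    rw [Finset.sum_pair P.hij] at hsplit
    have hrest : ∑ k ∈ Finset.univ \ ({i, j} : Finset (Fin m)), psize (γ k) = 0 := by
      omega
    intro k hki hkj
    have hk0 : psize (γ k) = 0 := by
      have hmem : k ∈ Finset.univ \ ({i, j} : Finset (Fin m)) := by
        simp [hki, hkj]
      exact Finset.sum_eq_zero_iff.mp hrest k hmem
    exact (psize_zero_iff (goodP_of_mp hγ k)).mp hk0
  refine ⟨a, by omega, ?_⟩
  funext k r
  by_cases hk : k = i
  · rw [hk]
    have hR : lamA i j n a i r = if r = 0 then a else 0 := by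
      simp [lamA]
    rw [hR, hrowi]
  · by_cases hk2 : k = j
    · rw [hk2]
      have hR : lamA i j n a j r = if r < n - a then 1 else 0 := by
        simp [lamA, Ne.symm P.hij]
      have h2 : n - a = L := by omega
      rw [hR, h2, hcolj]
    · have hR : lamA i j n a k r = 0 := by
        simp [lamA, hk, hk2]
      rw [hR, hothers k hk hk2]
      rfl

end Window

section Forward

variable {n m : ℕ} {q : ℂ} {u : Fin m → ℂ} {i j : Fin m}

lemma forward_main (P : Params n m q u i j) {α β : Fin m → ℕ → ℕ}
    (hα : IsMultipartitionOf α n) (hβ : IsMultipartitionOf β n)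
    (hF : ∀ z, mcontCount α u q z = mcontCount β u q z) :
    α = β ∨ ((∃ a, a ≤ n ∧ α = lamA i j n a) ∧ (∃ b, b ≤ n ∧ β = lamA i j n b)) := by
  classical
  by_cases hbad : ∃ (k l : Fin m) (c c' : ℤ), k ≠ l ∧ ccnt (α k) c ≠ 0 ∧
      ccnt (β l) c' ≠ 0 ∧ u k * q ^ c = u l * q ^ c'
  · -- the "bad" case: a residue shared between distinct components
    obtain ⟨k, l, c0, c0', hkl, hc0, hc0', heq⟩ := hbad
    right
    obtain ⟨z0, hz0def⟩ : ∃ z0 : ℂ, u k * q ^ c0 = z0 := ⟨_, rfl⟩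
    have hz0 : z0 ≠ 0 := by
      rw [← hz0def]
      exact mul_ne_zero (P.hu k) (zpow_ne_zero _ P.hq)
    have hFz0 : mcontCount α u q z0 ≠ 0 := by
      have := mge (u := u) hα k hz0def
      omega
    have hSF : ∀ z, mcontCount α u q z ≠ 0 → z ∈ suppF α u q :=
      fun z h => mem_suppF hα h
    have hSFcard : (suppF α u q).card ≤ n := card_suppF hα q
    have hn2 := P.hn
    -- counting tool
    have hcard : ∀ (base : ℤ) (N : ℕ), (N : ℤ) ≤ 2 * (n : ℤ) - 1 →
        (∀ s : ℕ, s < N → mcontCount α u q (z0 * q ^ (base + (s : ℤ))) ≠ 0) → N ≤ n := by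
      intro base N hN hall
      have hinj : Set.InjOn (fun s : ℕ => z0 * q ^ (base + (s : ℤ)))
          ↑(Finset.range N) := by
        intro s hs s' hs' hss
        simp only [Finset.coe_range, Set.mem_Iio] at hs hs'
        have h1 := qpow_cancel P.hq hz0 hss
        have h2 := P.qinj' h1 (by rw [abs_le]; constructor <;> push_cast <;> omega)
        omega
      have hmap : ∀ s ∈ Finset.range N, (z0 * q ^ (base + (s : ℤ))) ∈ suppF α u q :=
        fun s hs => hSF _ (hall s (Finset.mem_range.mp hs))
      have := Finset.card_le_card_of_injOn _ hmap hinj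
      rw [Finset.card_range] at this
      omega
    -- right end of the window
    have hexR : ∃ t : ℕ, mcontCount α u q (z0 * q ^ ((t : ℤ) + 1)) = 0 := by
      by_contra hno
      push_neg at hno
      have hle := hcard 0 (n + 1) (by push_cast; omega) (fun s hs => by
        rcases Nat.eq_zero_or_pos s with rfl | hs0
        · simpa using hFz0
        · have hc : (0 : ℤ) + (s : ℤ) = ((s - 1 : ℕ) : ℤ) + 1 := by push_cast; omega
          rw [hc]
          exact hno (s - 1))
      omega
    set rS := Nat.find hexR with hrSdef
    have hR2 : mcontCount α u q (z0 * q ^ ((rS : ℤ) + 1)) = 0 := Nat.find_spec hexR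
    have hR3 : ∀ e : ℤ, 0 ≤ e → e ≤ rS → mcontCount α u q (z0 * q ^ e) ≠ 0 := by
      intro e he1 he2
      rcases eq_or_lt_of_le he1 with he0 | he0
      · rw [← he0]
        simpa using hFz0
      · have ht : e.toNat - 1 < rS := by omega
        have := Nat.find_min hexR ht
        have hc : ((e.toNat - 1 : ℕ) : ℤ) + 1 = e := by omega
        rw [hc] at this
        exact this
    have hrSb : rS ≤ n - 1 := by
      by_contra hb
      push_neg at hb
      have := hcard 0 (n + 1) (by push_cast; omega) (fun s hs => by
        have : mcontCount α u q (z0 * q ^ ((s : ℤ))) ≠ 0 := hR3 s (by omega) (by omega)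
        simpa using this)
      omega
    -- left end of the window
    have hexL : ∃ t : ℕ, mcontCount α u q (z0 * q ^ (-(t : ℤ) - 1)) = 0 := by
      by_contra hno
      push_neg at hno
      have hle := hcard (-(n : ℤ)) (n + 1) (by push_cast; omega) (fun s hs => by
        rcases Nat.eq_or_lt_of_le (Nat.lt_succ_iff.mp hs) with hs0 | hs0
        · have hc : (-(n : ℤ)) + (s : ℤ) = 0 := by omega
          rw [hc]
          simpa using hFz0
        · have hc : (-(n : ℤ)) + (s : ℤ) = -((n - s - 1 : ℕ) : ℤ) - 1 := by push_cast; omega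
          rw [hc]
          exact hno (n - s - 1))
      omega
    set lS := Nat.find hexL with hlSdef
    have hL2 : mcontCount α u q (z0 * q ^ (-(lS : ℤ) - 1)) = 0 := Nat.find_spec hexL
    have hL3 : ∀ e : ℤ, -(lS : ℤ) ≤ e → e ≤ 0 → mcontCount α u q (z0 * q ^ e) ≠ 0 := by
      intro e he1 he2
      rcases eq_or_lt_of_le he2 with he0 | he0
      · rw [he0]
        simpa using hFz0
      · have ht : (-e).toNat - 1 < lS := by omega
        have := Nat.find_min hexL ht
        have hc : -(((-e).toNat - 1 : ℕ) : ℤ) - 1 = e := by omega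
        rw [hc] at this
        exact this
    have hin : ∀ e : ℤ, -(lS : ℤ) ≤ e → e ≤ rS → mcontCount α u q (z0 * q ^ e) ≠ 0 := by
      intro e he1 he2
      rcases le_or_gt e 0 with he0 | he0
      · exact hL3 e he1 he0
      · exact hR3 e (by omega) he2
    have hlSb : lS ≤ n - 1 := by
      by_contra hb
      push_neg at hb
      have := hcard (-(n : ℤ)) (n + 1) (by push_cast; omega) (fun s hs => by
        apply hin
        · omega
        · omega)
      omega
    have hlen : (lS : ℤ) + rS ≤ (n : ℤ) - 1 := by
      have := hcard (-(lS : ℤ)) (lS + rS + 1) (by push_cast; omega) (fun s hs => by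
        apply hin
        · omega
        · push_cast at hs ⊢
          omega)
      omega
    have W : IsWindow n q u α z0 lS rS := ⟨hz0, hin, hR2, hL2, hlen⟩
    have hγFα : ∀ z, mcontCount α u q z = mcontCount α u q z := fun _ => rfl
    have hγFβ : ∀ z, mcontCount β u q z = mcontCount α u q z := fun z => (hF z).symm
    have hptk : u k * q ^ c0 = z0 * q ^ (0 : ℤ) := by rw [zpow_zero, mul_one]; exact hz0def
    have hptl : u l * q ^ c0' = z0 * q ^ (0 : ℤ) := by
      rw [zpow_zero, mul_one, ← hz0def]; exact heq.symm
    obtain ⟨ek, hek1, hek2, hek3, _⟩ :=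
      center P W hα hγFα hc0 hptk (by omega) (by omega)
    obtain ⟨el, hel1, hel2, hel3, _⟩ :=
      center P W hβ hγFβ hc0' hptl (by omega) (by omega)
    have hstructure : u i = z0 * q ^ (-(lS : ℤ)) ∧ u j = z0 * q ^ ((rS : ℤ)) ∧
        (lS : ℤ) + rS = (n : ℤ) - 1 := by
      by_cases hset : ({k, l} : Set (Fin m)) = {i, j}
      · rcases Set.pair_eq_pair_iff.mp hset with ⟨rfl, rfl⟩ | ⟨rfl, rfl⟩
        · -- k = i, l = j
          have hrel2 : z0 * q ^ el = z0 * q ^ (ek + ((n : ℤ) - 1)) := by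
            rw [← hel1, P.hrelz, hek1, mul_assoc, ← zpow_add₀ P.hq]
          have h1 := qpow_cancel P.hq hz0 hrel2
          have h2 := P.qinj' h1 (by rw [abs_le]; constructor <;> omega)
          have hek' : ek = -(lS : ℤ) := by omega
          have hel' : el = (rS : ℤ) := by omega
          refine ⟨by rw [hek1, hek'], by rw [hel1, hel'], by omega⟩
        · -- k = j, l = i
          have hrel2 : z0 * q ^ ek = z0 * q ^ (el + ((n : ℤ) - 1)) := by
            rw [← hek1, P.hrelz, hel1, mul_assoc, ← zpow_add₀ P.hq]
          have h1 := qpow_cancel P.hq hz0 hrel2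
          have h2 := P.qinj' h1 (by rw [abs_le]; constructor <;> omega)
          have hel' : el = -(lS : ℤ) := by omega
          have hek' : ek = (rS : ℤ) := by omega
          refine ⟨by rw [hel1, hel'], by rw [hek1, hek'], by omega⟩
      · exfalso
        have hpt2 : u l * q ^ (0 : ℤ) = u k * q ^ (el - ek) := by
          rw [zpow_zero, mul_one, hel1, hek1, mul_assoc, ← zpow_add₀ P.hq,
            show ek + (el - ek) = el from by ring]
        have hr := ratio_eq (P.hu k) P.hq hpt2
        have hne2 : ({l, k} : Set (Fin m)) ≠ {i, j} := by
          rw [Set.pair_comm]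
          exact hset
        have := P.hother l k (Ne.symm hkl) hne2 (el - ek - 0) (by omega) (by omega)
        exact this hr
    obtain ⟨hui, huj, hsum⟩ := hstructure
    exact ⟨struct P W hui huj hsum hα hγFα, struct P W hui huj hsum hβ hγFβ⟩
  · -- the "good" case: contents match componentwise
    push_neg at hbad
    left
    funext k
    apply ccnt_inj (goodP_of_mp hα k) (goodP_of_mp hβ k)
    intro c
    have hhalf : ∀ (γ δ : Fin m → ℕ → ℕ), IsMultipartitionOf γ n → IsMultipartitionOf δ n →
        (∀ z, mcontCount γ u q z = mcontCount δ u q z) →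
        (∀ l c', k ≠ l → ccnt (δ l) c' ≠ 0 → u k * q ^ c ≠ u l * q ^ c') →
        ccnt (γ k) c ≠ 0 → ccnt (γ k) c = ccnt (δ k) c := by
      intro γ δ hγ hδ hγδ hnb hcc
      have h1 : mcontCount γ u q (u k * q ^ c) = ccnt (γ k) c := P.meval hγ hcc
      have h2 : mcontCount δ u q (u k * q ^ c) ≠ 0 := by
        rw [← hγδ]
        omega
      obtain ⟨l, c', hl1, hl2⟩ := mcover hδ h2
      have hlk : l = k := by
        by_contra hne
        exact hnb l c' (Ne.symm hne) hl1 hl2.symm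
      rw [hlk] at hl1 hl2
      have hw1 := ccnt_window (goodP_of_mp hγ k) hcc
      have hw2 := ccnt_window (goodP_of_mp hδ k) hl1
      have hs1 := psize_le_n hγ k
      have hs2 := psize_le_n hδ k
      have hq1 := qpow_cancel P.hq (P.hu k) hl2
      have hq2 := P.qinj' hq1 (by rw [abs_le] at *; omega)
      have hcc' : c' = c := by omega
      subst hcc'
      have h3 : mcontCount δ u q (u k * q ^ c') = ccnt (δ k) c' := P.meval hδ hl1
      rw [← h3, ← hγδ, h1]
    by_cases h1 : ccnt (α k) c ≠ 0
    · exact hhalf α β hα hβ hF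
        (fun l c' hne hb hcontra => hbad k l c c' hne h1 hb hcontra) h1
    · by_cases h2 : ccnt (β k) c ≠ 0
      · exact (hhalf β α hβ hα (fun z => (hF z).symm)
          (fun l c' hne ha hcontra => hbad l k c' c (Ne.symm hne) ha h2 hcontra.symm) h2).symm
      · push_neg at h1 h2
        rw [h1, h2]

end Forward

/-! ### small n -/

lemma mp_zero {m : ℕ} {γ : Fin m → ℕ → ℕ} (hγ : IsMultipartitionOf γ 0) (k : Fin m) :
    γ k = 0 := by
  have htot : ∑ k, psize (γ k) = 0 := hγ.2
  have := Finset.sum_eq_zero_iff.mp htot k (Finset.mem_univ k)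
  exact (psize_zero_iff (goodP_of_mp hγ k)).mp this

lemma mp_one {m : ℕ} {γ : Fin m → ℕ → ℕ} (hγ : IsMultipartitionOf γ 1) :
    ∃ k, γ = fun k' => if k' = k then (fun r => if r = 0 then 1 else 0)
      else (fun _ => 0) := by
  classical
  have htot : ∑ k, psize (γ k) = 1 := hγ.2
  obtain ⟨k, hk⟩ : ∃ k, psize (γ k) ≠ 0 := by
    by_contra hall
    push_neg at hall
    rw [Finset.sum_eq_zero (fun k _ => hall k)] at htot
    omega
  have hle : psize (γ k) ≤ 1 := by
    rw [← htot]
    exact Finset.single_le_sum (f := fun l => psize (γ l)) (fun _ _ => Nat.zero_le _)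
      (Finset.mem_univ k)
  have hk1 : psize (γ k) = 1 := by omega
  have hothers : ∀ l, l ≠ k → psize (γ l) = 0 := by
    have h2 : ∑ l ∈ Finset.univ.erase k, psize (γ l) + psize (γ k) = 1 := by
      rw [Finset.sum_erase_add _ _ (Finset.mem_univ k)]
      exact htot
    have h3 : ∑ l ∈ Finset.univ.erase k, psize (γ l) = 0 := by omega
    intro l hl
    exact Finset.sum_eq_zero_iff.mp h3 l (Finset.mem_erase.mpr ⟨hl, Finset.mem_univ l⟩)
  refine ⟨k, ?_⟩
  funext k' r
  by_cases hk' : k' = k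
  · rw [if_pos hk', hk']
    have hg := goodP_of_mp hγ k
    have h0 : γ k 0 ≠ 0 := by
      intro h00
      have : ∀ r, γ k r = 0 := fun r => by
        have := hg.antitone (Nat.zero_le r)
        omega
      exact hk ((psize_zero_iff hg).mpr (funext this))
    have h0le : γ k 0 ≤ 1 := by
      have := lam_le_psize hg 0
      omega
    have hnr : nrows (γ k) hg.2 ≤ 1 := by
      have := nrows_le_psize hg
      omega
    rcases Nat.eq_zero_or_pos r with rfl | hr
    · rw [if_pos rfl]
      omega
    · rw [if_neg (by omega : ¬ r = 0)]
      by_contra hcc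
      have := (nrows_spec hg r).mp hcc
      omega
  · rw [if_neg hk']
    have := (psize_zero_iff (goodP_of_mp hγ k')).mp (hothers k' hk')
    rw [this]
    rfl

lemma mcont_box {m : ℕ} {q : ℂ} (u : Fin m → ℂ) (k : Fin m) (z : ℂ) :
    mcontCount (fun k' => if k' = k then (fun r => if r = 0 then 1 else 0)
      else (fun _ => 0)) u q z = if u k = z then 1 else 0 := by
  classical
  rw [mcontCount, Finset.sum_eq_single_of_mem k (Finset.mem_univ k)]
  · rw [if_pos rfl, contCount_rowfun]
    rw [Finset.range_one, Finset.filter_singleton]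
    simp only [Nat.cast_zero, zpow_zero, mul_one]
    split_ifs with h <;> simp
  · intro l _ hl
    rw [if_neg hl, contCount_zerofun]

lemma forward_n1 {m : ℕ} {q : ℂ} {u : Fin m → ℂ} {i j : Fin m} (hq : q ≠ 0)
    (hu : ∀ k, u k ≠ 0) (hij : i ≠ j) (huij : u i = u j)
    (hother : ∀ k l : Fin m, k ≠ l → ({k, l} : Set (Fin m)) ≠ {i, j} →
      ∀ c : ℤ, -(1 : ℤ) < c → c < (1 : ℤ) → u k / u l ≠ q ^ c)
    {α β : Fin m → ℕ → ℕ} (hα : IsMultipartitionOf α 1) (hβ : IsMultipartitionOf β 1)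
    (hF : ∀ z, mcontCount α u q z = mcontCount β u q z) :
    α = β ∨ ((∃ a, a ≤ 1 ∧ α = lamA i j 1 a) ∧ (∃ b, b ≤ 1 ∧ β = lamA i j 1 b)) := by
  classical
  obtain ⟨ka, hka⟩ := mp_one hα
  obtain ⟨kb, hkb⟩ := mp_one hβ
  have h1 := hF (u ka)
  rw [hka, hkb, mcont_box, mcont_box, if_pos rfl] at h1
  have hub : u kb = u ka := by
    by_contra hne
    rw [if_neg hne] at h1
    omega
  by_cases hk : ka = kb
  · left
    rw [hka, hkb, hk]
  · right
    have hpair : (ka = i ∧ kb = j) ∨ (ka = j ∧ kb = i) := by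
      by_contra hcon
      have hset : ({kb, ka} : Set (Fin m)) ≠ {i, j} := by
        intro hset
        rcases Set.pair_eq_pair_iff.mp hset with ⟨h1', h2'⟩ | ⟨h1', h2'⟩
        · exact hcon (Or.inr ⟨h2', h1'⟩)
        · exact hcon (Or.inl ⟨h2', h1'⟩)
      have hr : u kb / u ka = q ^ (0 : ℤ) := by
        rw [zpow_zero, hub, div_self (hu ka)]
      exact hother kb ka (fun h => hk h.symm) hset 0 (by omega) (by omega) hr
    have hboxi : (fun k' => if k' = i then (fun r => if r = 0 then 1 else 0)
        else (fun _ => (0 : ℕ))) = lamA i j 1 1 := by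
      funext k' r
      by_cases h' : k' = i
      · simp [lamA, h']
      · by_cases h'' : k' = j <;> simp [lamA, h', h'', hij, Ne.symm hij]
    have hboxj : (fun k' => if k' = j then (fun r => if r = 0 then 1 else 0)
        else (fun _ => (0 : ℕ))) = lamA i j 1 0 := by
      funext k' r
      by_cases h' : k' = j
      · have hne' : k' ≠ i := by rw [h']; exact Ne.symm hij
        simp only [lamA, if_pos h', if_neg hne']
        rcases Nat.eq_zero_or_pos r with rfl | hr
        · simp
        · rw [if_neg (by omega : ¬ r = 0), if_neg (by omega : ¬ r < 1 - 0)]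
      · by_cases h'' : k' = i <;> simp [lamA, h', h'', hij, Ne.symm hij]
    rcases hpair with ⟨hai, hbj⟩ | ⟨haj, hbi⟩
    · exact ⟨⟨1, le_refl 1, by rw [hka, hai, hboxi]⟩,
        ⟨0, by omega, by rw [hkb, hbj, hboxj]⟩⟩
    · exact ⟨⟨0, by omega, by rw [hka, haj, hboxj]⟩,
        ⟨1, le_refl 1, by rw [hkb, hbi, hboxi]⟩⟩

/-- Under the parameter hypotheses, two multipartitions of `n` have equal
content iff they are equal, or both are of the form `λ_a`. -/
theorem stmt5 (n m : ℕ) (q : ℂ) (u : Fin m → ℂ) (hq : q ≠ 0) (hu : ∀ k, u k ≠ 0)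
    (i j : Fin m) (hij : i ≠ j)
    (hrel : q ^ (n - 1) * u i = u j)
    (hother : ∀ k l : Fin m, k ≠ l → ({k, l} : Set (Fin m)) ≠ {i, j} →
      ∀ c : ℤ, -(n : ℤ) < c → c < (n : ℤ) → u k / u l ≠ q ^ c)
    (hord : OrderAtLeast q (2 * n - 1))
    (α β : Fin m → ℕ → ℕ)
    (hα : IsMultipartitionOf α n) (hβ : IsMultipartitionOf β n) :
    (∀ z : ℂ, mcontCount α u q z = mcontCount β u q z) ↔
      (α = β ∨ ((∃ a, a ≤ n ∧ α = lamA i j n a) ∧ (∃ b, b ≤ n ∧ β = lamA i j n b))) := by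
  constructor
  · intro hF
    rcases Nat.lt_or_ge n 2 with hn | hn
    · have h01 : n = 0 ∨ n = 1 := by omega
      rcases h01 with rfl | rfl
      · left
        funext k
        rw [mp_zero hα k, mp_zero hβ k]
      · have huij : u i = u j := by simpa using hrel
        exact forward_n1 hq hu hij huij
          (fun k l h1 h2 c hc1 hc2 => hother k l h1 h2 c (by exact_mod_cast hc1)
            (by exact_mod_cast hc2)) hα hβ hF
    · have hrelz : u j = u i * q ^ ((n : ℤ) - 1) := by
        rw [← hrel, mul_comm]
        congr 1
        rw [show ((n : ℤ) - 1) = ((n - 1 : ℕ) : ℤ) by omega, zpow_natCast]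
      exact forward_main ⟨hq, hu, hij, hn, hrelz, hother, hord⟩ hα hβ hF
  · rintro (rfl | ⟨⟨a, ha, rfl⟩, ⟨b, hb, hβeq⟩⟩)
    · intro z
      rfl
    · subst hβeq
      intro z
      rcases Nat.eq_zero_or_pos n with rfl | hn
      · have ha0 : a = 0 := by omega
        have hb0 : b = 0 := by omega
        rw [ha0, hb0]
      · rw [mcont_lamA hq hij hrel hn ha z, mcont_lamA hq hij hrel hn hb z]
end

section
/- With the parameter hypotheses as before, let α be a multipartition of n with a_1 the length of the first row of α^(i) and a_2 the length of the first column of α^(j). If a_1 + a_2 < n, then u_i·q^(a_1) is not in the content of α. -/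
private lemma key_ord {n : ℕ} {q : ℂ} (hord : OrderAtLeast q (2 * n - 1)) (d : ℤ)
    (h1 : 1 ≤ d) (h2 : d ≤ 2 * (n : ℤ) - 2) (he : q ^ d = 1) : False := by
  refine hord d.toNat (by omega) (by omega) ?_
  rw [← zpow_natCast, Int.toNat_of_nonneg (by omega)]
  exact he

private lemma row_bound {f : ℕ → ℕ} (_hf : IsPartitionFun f)
    (hfin : (Function.support f).Finite) {r c : ℕ} (h : c < f r) :
    c + 1 ≤ ∑ᶠ i, f i := by
  have h1 : f r ≤ ∑ᶠ i, f i := by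
    rw [finsum_eq_sum_of_support_subset f
      (fun x hx => Finset.mem_coe.mpr (hfin.mem_toFinset.mpr hx))]
    exact Finset.single_le_sum (fun x _ => Nat.zero_le _)
      (hfin.mem_toFinset.mpr (by simp only [Function.mem_support]; omega))
  omega

private lemma anti_of_partition {f : ℕ → ℕ} (hf : IsPartitionFun f) : Antitone f :=
  antitone_nat_of_succ_le hf

private lemma col_bound {f : ℕ → ℕ} (hf : IsPartitionFun f)
    (hfin : (Function.support f).Finite) {r c : ℕ} (h : c < f r) :
    r + 1 ≤ ∑ᶠ i, f i := by
  rw [finsum_eq_sum_of_support_subset f (s := hfin.toFinset ∪ Finset.range (r+1))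
    (fun x hx => Finset.mem_coe.mpr (Finset.mem_union_left _ (hfin.mem_toFinset.mpr hx)))]
  calc r + 1 = ∑ x ∈ Finset.range (r+1), 1 := by simp
    _ ≤ ∑ x ∈ Finset.range (r+1), f x := by
        refine Finset.sum_le_sum fun x hx => ?_
        have := anti_of_partition hf (Nat.lt_succ_iff.mp (Finset.mem_range.mp hx))
        omega
    _ ≤ _ := Finset.sum_le_sum_of_subset Finset.subset_union_right

private lemma col_card_bound {f : ℕ → ℕ} (hf : IsPartitionFun f)
    (hfin : (Function.support f).Finite) {r c : ℕ} (h : c < f r) :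
    r + 1 ≤ (Function.support f).ncard := by
  have hsub : (↑(Finset.range (r+1)) : Set ℕ) ⊆ Function.support f := by
    intro x hx
    simp only [Finset.coe_range, Set.mem_Iio] at hx
    have := anti_of_partition hf (Nat.lt_succ_iff.mp hx)
    simp only [Function.mem_support]
    omega
  have := Set.ncard_le_ncard hsub hfin
  rwa [Set.ncard_coe_finset, Finset.card_range] at this

/-- Under the parameter hypotheses, if `a₁` is the first-row length of
`α^(i)` and `a₂` the first-column length of `α^(j)` with `a₁ + a₂ < n`, then
`u i * q ^ a₁` is not a residue of `α`. -/
theorem stmt6 (n m : ℕ) (q : ℂ) (u : Fin m → ℂ) (hq : q ≠ 0) (hu : ∀ k, u k ≠ 0)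
    (i j : Fin m) (hij : i ≠ j)
    (hrel : q ^ (n - 1) * u i = u j)
    (hother : ∀ k l : Fin m, k ≠ l → ({k, l} : Set (Fin m)) ≠ {i, j} →
      ∀ c : ℤ, -(n : ℤ) < c → c < (n : ℤ) → u k / u l ≠ q ^ c)
    (hord : OrderAtLeast q (2 * n - 1))
    (α : Fin m → ℕ → ℕ) (hα : IsMultipartitionOf α n)
    (a₁ a₂ : ℕ) (ha₁ : a₁ = α i 0)
    (ha₂ : a₂ = Set.ncard (Function.support (α j)))
    (hsum : a₁ + a₂ < n) :
    mcontCount α u q (u i * q ^ a₁) = 0 := by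
  have hn : 1 ≤ n := by omega
  obtain ⟨hpart, hsum_n⟩ := hα
  have hSn : ∀ k, (∑ᶠ r, α k r) ≤ n := by
    intro k
    rw [← hsum_n]
    exact Finset.single_le_sum (f := fun k => ∑ᶠ r, α k r) (fun x _ => Nat.zero_le _)
      (Finset.mem_univ k)
  have hpairs : ∀ k, k ≠ i → (∑ᶠ r, α k r) + (∑ᶠ r, α i r) ≤ n := by
    intro k hk
    have h := Finset.sum_le_sum_of_subset (s := ({k, i} : Finset (Fin m)))
      (t := Finset.univ) (f := fun k => ∑ᶠ r, α k r) (Finset.subset_univ _)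
    rw [Finset.sum_pair hk] at h
    rw [← hsum_n]
    exact h
  have hSi : a₁ ≤ ∑ᶠ r, α i r := by
    rw [ha₁]
    by_cases h0 : α i 0 = 0
    · simp [h0]
    · have := row_bound (hpart i).1 (hpart i).2 (r := 0) (c := α i 0 - 1) (by omega)
      omega
  unfold mcontCount
  apply Finset.sum_eq_zero
  intro k _
  unfold contCount
  have hempty : {p : ℕ × ℕ | p.2 < α k p.1 ∧ resid (u k) q p.1 p.2 = u i * q ^ a₁} = ∅ := by
    rw [Set.eq_empty_iff_forall_notMem]
    rintro ⟨r, c⟩ ⟨hc0, heq⟩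
    have hc : c < α k r := hc0
    simp only [resid] at heq
    rw [show (q : ℂ) ^ a₁ = q ^ (a₁ : ℤ) from (zpow_natCast q a₁).symm] at heq
    have hrowk : c + 1 ≤ ∑ᶠ r, α k r := row_bound (hpart k).1 (hpart k).2 hc
    have hcolk : r + 1 ≤ ∑ᶠ r, α k r := col_bound (hpart k).1 (hpart k).2 hc
    rcases eq_or_ne k i with rfl | hki
    · -- component i
      have hca : c + 1 ≤ a₁ := by
        rw [ha₁]
        have := anti_of_partition (hpart k).1 (Nat.zero_le r)
        omega
      have h2 : q ^ ((c : ℤ) - r) = q ^ (a₁ : ℤ) := mul_left_cancel₀ (hu k) heq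
      have h3 : q ^ ((a₁ : ℤ) - ((c : ℤ) - r)) = 1 := by
        rw [zpow_sub₀ hq, h2, div_self (zpow_ne_zero _ hq)]
      refine key_ord hord ((a₁ : ℤ) - ((c : ℤ) - r)) ?_ ?_ h3
      · omega
      · have := hSn k
        omega
    rcases eq_or_ne k j with rfl | hkj
    · -- component j
      rw [← hrel] at heq
      have h2 : u i * (q ^ (n - 1) * q ^ ((c : ℤ) - r)) = u i * q ^ (a₁ : ℤ) := by
        rw [← heq]; ring
      have h2' := mul_left_cancel₀ (hu i) h2
      have h3 : q ^ (((n : ℤ) - 1) + ((c : ℤ) - r) - a₁) = 1 := by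
        rw [zpow_sub₀ hq, zpow_add₀ hq, show ((n : ℤ) - 1) = ((n - 1 : ℕ) : ℤ) by omega,
          zpow_natCast, h2', div_self (zpow_ne_zero _ hq)]
      have hcol2 : r + 1 ≤ a₂ := by
        rw [ha₂]
        exact col_card_bound (hpart k).1 (hpart k).2 hc
      refine key_ord hord (((n : ℤ) - 1) + ((c : ℤ) - r) - a₁) ?_ ?_ h3
      · omega
      · have := hSn k
        omega
    · -- other components
      have h3 : u k / u i = q ^ ((a₁ : ℤ) - ((c : ℤ) - r)) := by
        rw [div_eq_iff (hu i), zpow_sub₀ hq, div_mul_eq_mul_div, eq_div_iff (zpow_ne_zero _ hq)]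
        linear_combination heq
      have hset : ({k, i} : Set (Fin m)) ≠ {i, j} := by
        intro h
        have hk : k ∈ ({i, j} : Set (Fin m)) := h ▸ (by simp)
        simp only [Set.mem_insert_iff, Set.mem_singleton_iff] at hk
        tauto
      have hpair := hpairs k hki
      have h1 := hSn k
      refine hother k i hki hset ((a₁ : ℤ) - ((c : ℤ) - r)) ?_ ?_ h3
      · omega
      · omega
  rw [hempty, Set.ncard_empty]
end

section
/- Suppose q has finite multiplicative order k with 1 ≤ k ≤ n. Then the single-row partition (k) (a row of k boxes, regarded as a one-component piece of a multipartition) is not a Kleshchev multipartition: its unique removable node is not normal, hence not good, for any parameters u. -/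
/-- The node at the end of row `x.2` of component `x.1` is removable. -/
def IsRemovable {m : ℕ} (lam : Fin m → ℕ → ℕ) (x : Fin m × ℕ) : Prop :=
  0 < lam x.1 x.2 ∧ lam x.1 (x.2 + 1) < lam x.1 x.2

/-- Residue of the removable node at the end of row `x.2` of component `x.1`. -/
noncomputable def remRes {m : ℕ} (lam : Fin m → ℕ → ℕ) (u : Fin m → ℂ) (q : ℂ)
    (x : Fin m × ℕ) : ℂ := resid (u x.1) q x.2 (lam x.1 x.2 - 1)

/-- A node can be added at the end of row `x.2` of component `x.1`. -/
def IsAddable {m : ℕ} (lam : Fin m → ℕ → ℕ) (x : Fin m × ℕ) : Prop :=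
  x.2 = 0 ∨ lam x.1 x.2 < lam x.1 (x.2 - 1)

/-- Residue of the addable node at the end of row `x.2` of component `x.1`. -/
noncomputable def addRes {m : ℕ} (lam : Fin m → ℕ → ℕ) (u : Fin m → ℂ) (q : ℂ)
    (x : Fin m × ℕ) : ℂ := resid (u x.1) q x.2 (lam x.1 x.2)

/-- `y` is below `x`: later component, or same component and lower row. -/
def NodeBelow {m : ℕ} (x y : Fin m × ℕ) : Prop :=
  x.1 < y.1 ∨ (x.1 = y.1 ∧ x.2 < y.2)

/-- A removable node `x` of residue `a` is normal if for every addable `a`-node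
`y` below it, there are more removable `a`-nodes between `x` and `y` than
addable `a`-nodes. -/
noncomputable def IsNormal {m : ℕ} (lam : Fin m → ℕ → ℕ) (u : Fin m → ℂ) (q : ℂ)
    (a : ℂ) (x : Fin m × ℕ) : Prop :=
  IsRemovable lam x ∧ remRes lam u q x = a ∧
  ∀ y, IsAddable lam y → addRes lam u q y = a → NodeBelow x y →
    Set.ncard {z | IsRemovable lam z ∧ remRes lam u q z = a ∧ NodeBelow x z ∧ NodeBelow z y} >
    Set.ncard {z | IsAddable lam z ∧ addRes lam u q z = a ∧ NodeBelow x z ∧ NodeBelow z y}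

/-- A good `a`-node is the highest normal `a`-node. -/
noncomputable def IsGood {m : ℕ} (lam : Fin m → ℕ → ℕ) (u : Fin m → ℂ) (q : ℂ)
    (a : ℂ) (x : Fin m × ℕ) : Prop :=
  IsNormal lam u q a x ∧ ∀ y, IsNormal lam u q a y → y = x ∨ NodeBelow x y

/-- Remove the (removable) node at the end of row `x.2` of component `x.1`. -/
def removeNode {m : ℕ} (lam : Fin m → ℕ → ℕ) (x : Fin m × ℕ) : Fin m → ℕ → ℕ :=
  fun t r => if t = x.1 ∧ r = x.2 then lam t r - 1 else lam t r

/-- Kleshchev multipartitions: the empty one is Kleshchev, and `lam` is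
Kleshchev iff it becomes Kleshchev after removing some good node. -/
inductive Kleshchev {m : ℕ} (u : Fin m → ℂ) (q : ℂ) : (Fin m → ℕ → ℕ) → Prop
  | empty : Kleshchev u q (fun _ _ => 0)
  | step (lam : Fin m → ℕ → ℕ) (a : ℂ) (x : Fin m × ℕ) :
      IsGood lam u q a x → Kleshchev u q (removeNode lam x) → Kleshchev u q lam

/-! A removable node at the end of row `i` has residue `u q^(λᵢ - 1 - i)` and the addable node
at the end of row `i + 1` has residue `u q^(λᵢ₊₁ - i - 1)`; they agree as soon as
`q^(λᵢ - λᵢ₊₁) = 1`. Nothing lies strictly between the two, so the removable node is then not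
normal. In the one-row partition `(k)` with `q^k = 1` this applies to every node (elsewhere
`λᵢ - λᵢ₊₁ = 0`), and a nonempty multipartition without normal nodes has no good node to
remove. -/

theorem not_nodeBelow_between {m : ℕ} (t : Fin m) (r : ℕ) (z : Fin m × ℕ) :
    ¬ (NodeBelow (t, r) z ∧ NodeBelow z (t, r + 1)) := by
  rintro ⟨hxz | ⟨rfl, hr⟩, hzy | ⟨hz, hr'⟩⟩ <;> simp_all <;> omega

theorem addRes_succ_eq_remRes {m : ℕ} {lam : Fin m → ℕ → ℕ} {u : Fin m → ℂ} {q : ℂ}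
    {x : Fin m × ℕ} (hq0 : q ≠ 0) (hx : IsRemovable lam x)
    (hpow : q ^ (lam x.1 x.2 - lam x.1 (x.2 + 1)) = 1) :
    addRes lam u q (x.1, x.2 + 1) = remRes lam u q x := by
  obtain ⟨hpos, hlt⟩ := hx
  have hexp : ((lam x.1 x.2 - 1 : ℕ) : ℤ) - x.2 =
      ((lam x.1 (x.2 + 1) : ℤ) - (x.2 + 1 : ℕ)) + (lam x.1 x.2 - lam x.1 (x.2 + 1) : ℕ) := by
    omega
  rw [addRes, remRes, resid, resid, hexp, zpow_add₀ hq0, zpow_natCast, hpow, mul_one]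

theorem not_isNormal_of_pow_eq_one {m : ℕ} {lam : Fin m → ℕ → ℕ} {u : Fin m → ℂ} {q : ℂ}
    {x : Fin m × ℕ} (a : ℂ) (hq0 : q ≠ 0)
    (hpow : q ^ (lam x.1 x.2 - lam x.1 (x.2 + 1)) = 1) :
    ¬ IsNormal lam u q a x := by
  rintro ⟨hx, rfl, hnormal⟩
  have hadd : IsAddable lam (x.1, x.2 + 1) := Or.inr hx.2
  have hgt := hnormal _ hadd (addRes_succ_eq_remRes hq0 hx hpow) (Or.inr ⟨rfl, x.2.lt_succ_self⟩)
  have hempty : {z | IsRemovable lam z ∧ remRes lam u q z = remRes lam u q x ∧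
      NodeBelow x z ∧ NodeBelow z (x.1, x.2 + 1)} = ∅ :=
    Set.eq_empty_of_forall_notMem fun z hz => not_nodeBelow_between x.1 x.2 z hz.2.2
  simp [hempty] at hgt

theorem not_kleshchev_of_forall_not_isNormal {m : ℕ} {lam : Fin m → ℕ → ℕ} {u : Fin m → ℂ}
    {q : ℂ} (hne : lam ≠ fun _ _ => 0) (h : ∀ a x, ¬ IsNormal lam u q a x) :
    ¬ Kleshchev u q lam := by
  rintro (_ | ⟨_, a, x, hgood, _⟩)
  · exact hne rfl
  · exact h a x hgood.1

def singleRow {m : ℕ} (s : Fin m) (k : ℕ) : Fin m → ℕ → ℕ :=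
  fun t r => if t = s ∧ r = 0 then k else 0

theorem singleRow_ne_zero {m : ℕ} (s : Fin m) {k : ℕ} (hk : k ≠ 0) :
    singleRow s k ≠ fun _ _ => 0 := fun h => hk (by simpa [singleRow] using congrFun₂ h s 0)

theorem pow_singleRow_sub_eq_one {m : ℕ} (s : Fin m) {k : ℕ} {q : ℂ} (hqk : q ^ k = 1)
    (x : Fin m × ℕ) : q ^ (singleRow s k x.1 x.2 - singleRow s k x.1 (x.2 + 1)) = 1 := by
  unfold singleRow
  split_ifs <;> simp_all

theorem stmt7_general (m k : ℕ) (q : ℂ) (u : Fin m → ℂ) (hq0 : q ≠ 0)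
    (hk1 : 1 ≤ k) (hqk : q ^ k = 1) (s : Fin m) :
    (∀ (a : ℂ) (x : Fin m × ℕ),
      ¬ IsNormal (fun t r => if t = s ∧ r = 0 then k else 0) u q a x) ∧
    ¬ Kleshchev u q (fun t r => if t = s ∧ r = 0 then k else 0) := by
  have hnormal : ∀ a x, ¬ IsNormal (singleRow s k) u q a x := fun a x =>
    not_isNormal_of_pow_eq_one a hq0 (pow_singleRow_sub_eq_one s hqk x)
  exact ⟨hnormal, not_kleshchev_of_forall_not_isNormal (singleRow_ne_zero s (by omega)) hnormal⟩

/-- If `q` has finite multiplicative order `k` with `1 ≤ k ≤ n`, then the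
single-row partition `(k)` placed in any component `s` has no normal node
(in particular its unique removable node is not normal, hence not good), so it
is not Kleshchev, for any parameters `u`. -/
theorem stmt7 (n m k : ℕ) (q : ℂ) (u : Fin m → ℂ) (hq0 : q ≠ 0) (hq1 : q ≠ 1)
    (hu : ∀ t, u t ≠ 0) (hk1 : 1 ≤ k) (hkn : k ≤ n)
    (hqk : q ^ k = 1) (hmin : ∀ l : ℕ, 0 < l → l < k → q ^ l ≠ 1)
    (s : Fin m) :
    (∀ (a : ℂ) (x : Fin m × ℕ),
      ¬ IsNormal (fun t r => if t = s ∧ r = 0 then k else 0) u q a x) ∧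
    ¬ Kleshchev u q (fun t r => if t = s ∧ r = 0 then k else 0) :=
  stmt7_general m k q u hq0 hk1 hqk s
end

section
/- Let q ∈ ℂ* with q^c u_i = u_j for nonzero u_i, u_j, where 0 ≤ c < n - 1, and suppose q^(c+1) ≠ 1. Then both the multipartition λ with the single row (n) in position i (empty elsewhere) and the multipartition μ with the hook (n-1, 1) in position i (empty elsewhere) are not Kleshchev with respect to the parameters (q; u_1, …, u_m). -/
/-! Removing a good node from a multipartition whose only nonempty component `i` has two rows
`(k, e)` with `e ≤ 1` and `k > c` leaves a multipartition of the same shape, so no Kleshchev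
multipartition has this shape. Indeed, when `k = c + 1` the last node of the first row has
residue `u i * q ^ c = u j`, like the addable node on top of the empty component `j` below it,
and the only other removable node, `(i, 1)`, has residue `u i * q⁻¹ ≠ u j` because
`q ^ (c + 1) ≠ 1`; so that node is not normal, and the good node removed has `k > c + 1`. -/

theorem IsNormal.exists_removable_between {m : ℕ} {lam : Fin m → ℕ → ℕ} {u : Fin m → ℂ}
    {q a : ℂ} {x y : Fin m × ℕ} (hx : IsNormal lam u q a x) (hy : IsAddable lam y)
    (hya : addRes lam u q y = a) (hxy : NodeBelow x y) :
    ∃ z, IsRemovable lam z ∧ remRes lam u q z = a ∧ NodeBelow x z ∧ NodeBelow z y :=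
  Set.nonempty_of_ncard_ne_zero (Nat.zero_lt_of_lt (hx.2.2 y hy hya hxy)).ne'

def twoRow {m : ℕ} (i : Fin m) (k e : ℕ) : Fin m → ℕ → ℕ :=
  fun t r => if t = i then (if r = 0 then k else if r = 1 then e else 0) else 0

section twoRow

variable {m : ℕ} (i : Fin m) (k e : ℕ)

theorem twoRow_eq_row (n : ℕ) :
    twoRow i n 0 = fun t r => if t = i ∧ r = 0 then n else 0 := by
  funext t r
  by_cases ht : t = i <;> by_cases hr : r = 0 <;> simp [twoRow, ht, hr]

theorem eq_of_isRemovable_twoRow {x : Fin m × ℕ} (hx : IsRemovable (twoRow i k e) x) :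
    x = (i, 0) ∨ x = (i, 1) := by
  obtain ⟨t, r⟩ := x
  obtain ⟨hpos, -⟩ := hx
  by_cases ht : t = i
  · subst ht
    rcases r with _ | _ | r
    · exact Or.inl rfl
    · exact Or.inr rfl
    · simp [twoRow] at hpos
  · simp [twoRow, ht] at hpos

theorem removeNode_twoRow_zero : removeNode (twoRow i k e) (i, 0) = twoRow i (k - 1) e := by
  funext t r
  by_cases ht : t = i <;> by_cases hr : r = 0 <;> simp [removeNode, twoRow, ht, hr]

theorem removeNode_twoRow_one : removeNode (twoRow i k e) (i, 1) = twoRow i k (e - 1) := by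
  funext t r
  by_cases ht : t = i <;> by_cases hr : r = 1 <;> simp [removeNode, twoRow, ht, hr]

theorem remRes_twoRow_zero (u : Fin m → ℂ) (q : ℂ) :
    remRes (twoRow i k e) u q (i, 0) = u i * q ^ (k - 1) := by
  simp [remRes, resid, twoRow, ← zpow_natCast]

theorem remRes_twoRow_one (u : Fin m → ℂ) (q : ℂ) :
    remRes (twoRow i k 1) u q (i, 1) = u i * q⁻¹ := by
  simp [remRes, resid, twoRow]

theorem addRes_twoRow_of_ne {j : Fin m} (hji : j ≠ i) (u : Fin m → ℂ) (q : ℂ) :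
    addRes (twoRow i k e) u q (j, 0) = u j := by
  simp [addRes, resid, twoRow, hji]

end twoRow

section Obstruction

variable {m : ℕ} {q : ℂ} {u : Fin m → ℂ} {i j : Fin m} {c : ℕ}

theorem not_isNormal_twoRow_of_pow_mul_eq (hq0 : q ≠ 0) (hui : u i ≠ 0) (hij : i < j)
    (hrel : q ^ c * u i = u j) (hqc : q ^ (c + 1) ≠ 1) {e : ℕ} (he : e ≤ 1) (a : ℂ) :
    ¬ IsNormal (twoRow i (c + 1) e) u q a (i, 0) := by
  intro hx
  have ha : a = u j := by
    rw [← hx.2.1, remRes_twoRow_zero i _ e u q, add_tsub_cancel_right, ← hrel, mul_comm]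
  obtain ⟨z, hz, hza, hxz, -⟩ := hx.exists_removable_between (Or.inl rfl)
    (by rw [addRes_twoRow_of_ne i _ e hij.ne' u q, ha]) (Or.inl hij)
  rcases eq_of_isRemovable_twoRow i _ e hz with rfl | rfl
  · simp [NodeBelow] at hxz
  · obtain rfl : e = 1 := by
      have := hz.1
      simp [twoRow] at this
      omega
    rw [remRes_twoRow_one, ha, ← hrel] at hza
    apply hqc
    have : u i * q ^ (c + 1) = u i :=
      calc u i * q ^ (c + 1) = q ^ c * u i * q := by ring
        _ = u i := by rw [← hza, inv_mul_cancel_right₀ hq0]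
    exact (mul_eq_left₀ hui).1 this

theorem not_kleshchev_twoRow (hq0 : q ≠ 0) (hui : u i ≠ 0) (hij : i < j)
    (hrel : q ^ c * u i = u j) (hqc : q ^ (c + 1) ≠ 1) {k e : ℕ} (hk : c + 1 ≤ k) (he : e ≤ 1) :
    ¬ Kleshchev u q (twoRow i k e) := by
  intro h
  generalize hlam : twoRow i k e = lam at h
  induction h generalizing k e with
  | empty =>
    have := congrFun (congrFun hlam i) 0
    simp [twoRow] at this
    omega
  | step lam a x hgood _ ih =>
    subst hlam
    rcases eq_of_isRemovable_twoRow i k e hgood.1.1 with rfl | rfl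
    · have hk' : k ≠ c + 1 := by
        rintro rfl
        exact not_isNormal_twoRow_of_pow_mul_eq hq0 hui hij hrel hqc he a hgood.1
      exact ih (by omega) he (removeNode_twoRow_zero i k e).symm
    · exact ih hk (by omega) (removeNode_twoRow_one i k e).symm

end Obstruction

theorem stmt17_general (n m : ℕ) (q : ℂ) (u : Fin m → ℂ)
    (hq0 : q ≠ 0) (hu : ∀ t, u t ≠ 0)
    (i j : Fin m) (hij : i < j)
    (c : ℕ) (hc : c < n - 1) (hrel : q ^ c * u i = u j)
    (hqc : q ^ (c + 1) ≠ 1) :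
    ¬ Kleshchev u q (fun t r => if t = i ∧ r = 0 then n else 0) ∧
    ¬ Kleshchev u q (fun t r =>
        if t = i then (if r = 0 then n - 1 else if r = 1 then 1 else 0) else 0) := by
  constructor
  · rw [← twoRow_eq_row]
    exact not_kleshchev_twoRow hq0 (hu i) hij hrel hqc (by omega) zero_le_one
  · exact not_kleshchev_twoRow hq0 (hu i) hij hrel hqc (by omega) le_rfl

/-- If `q ^ c * u i = u j` with `0 ≤ c < n - 1`, `i < j` and `q ^ (c+1) ≠ 1`,
then neither the multipartition with the single row `(n)` in position `i`, nor
the one with the hook `(n-1, 1)` in position `i` (empty elsewhere), is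
Kleshchev. -/
theorem stmt17 (n m : ℕ) (hn : 2 ≤ n) (q : ℂ) (u : Fin m → ℂ)
    (hq0 : q ≠ 0) (hq1 : q ≠ 1) (hu : ∀ t, u t ≠ 0)
    (i j : Fin m) (hij : i < j)
    (c : ℕ) (hc : c < n - 1) (hrel : q ^ c * u i = u j)
    (hqc : q ^ (c + 1) ≠ 1) :
    ¬ Kleshchev u q (fun t r => if t = i ∧ r = 0 then n else 0) ∧
    ¬ Kleshchev u q (fun t r =>
        if t = i then (if r = 0 then n - 1 else if r = 1 then 1 else 0) else 0) :=
  stmt17_general n m q u hq0 hu i j hij c hc hrel hqc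
end
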